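/- arXiv:0812.4470 — 4 statements merged into one kernel-verified Lean document; each statement's English description precedes it below -/
import Mathlib

section
/- For every integer k ≥ 7, the Thue–Morse word t contains two distinct factors of length k each of which has 01 as a prefix and 01 as a suffix (i.e., two distinct factors of the form 01x01). -/
/-- The Thue–Morse morphism θ (0 ↦ 01, 1 ↦ 10), with 0 = `false`, 1 = `true`,
applied letterwise to a word. -/
def tmMap (w : List Bool) : List Bool :=
  w.flatMap (fun b => if b then [true, false] else [false, true])

/-- A word is cubefree if it contains no non-empty factor of the form `x ++ x ++ x`. -/
def Cubefree (w : List Bool) : Prop :=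
  ∀ x : List Bool, x ≠ [] → ¬ (x ++ x ++ x) <:+: w

/-- `w` is a factor of the Thue–Morse word `t = θ^ω(0)`: since the words `θ^m(0)`
are prefixes of `t` whose lengths tend to infinity, this holds iff `w` is an
infix of `θ^m(0)` for some `m`. -/
def FactorTM (w : List Bool) : Prop :=
  ∃ m : ℕ, w <:+: tmMap^[m] [false]

/-- The binary morphism determined by `h : Bool → List Bool` is cubefree. -/
def CubefreeMorphism (h : Bool → List Bool) : Prop :=
  ∀ w : List Bool, Cubefree w → Cubefree (w.flatMap h)

/-!
Write `t n` for the parity of the binary digit sum of `n`, so that `t (2n) = t n`,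
`t (2n+1) = !t n`, and `θ^m(0)` is the window `t 0 ⋯ t (2^m - 1)`. Halving the distance shows
that every pair of letters occurs in `t` at every distance `d` (`a ≠ b` needing `d ≠ 0`), and this
yields a factor `w = 01x01` of each length `k ≥ 7`.

The factors of `t` are closed under `θ` and under `w ↦ w̄ᴿ` (reversed complement), which fixes
`θ^(2j+1)(0)`. So `01 x̄ᴿ 01` is a factor as well, and it is a second one as soon as `x ≠ x̄ᴿ`.
For odd `k` the middle letter of `x` shows this. For even `k` we take `w = θ(0u0)`, so that
`x̄ᴿ = θ(uᴿ)` and we only need `0u0` not to be a palindrome: `t` has no palindrome of length `5`,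
and an even-length window whose two middle letters are `t (2c)` and `t (2c+1)` is none either.
-/

def thueMorse (n : ℕ) : Bool := (Nat.digits 2 n).sum.bodd

lemma thueMorse_add_two_mul {r : ℕ} (hr : r < 2) (n : ℕ) :
    thueMorse (r + 2 * n) = (r.bodd ^^ thueMorse n) := by
  rcases Nat.eq_zero_or_pos n with rfl | hn
  · interval_cases r <;> rfl
  · rw [thueMorse, Nat.digits_add 2 (by norm_num) r n hr (Or.inr hn.ne'), List.sum_cons,
      Nat.bodd_add, thueMorse]

@[simp] lemma thueMorse_zero : thueMorse 0 = false := rfl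

@[simp] lemma thueMorse_two_mul (n : ℕ) : thueMorse (2 * n) = thueMorse n := by
  simpa using thueMorse_add_two_mul (r := 0) (by norm_num) n

@[simp] lemma thueMorse_two_mul_add_one (n : ℕ) : thueMorse (2 * n + 1) = !thueMorse n := by
  simpa [add_comm] using thueMorse_add_two_mul (r := 1) (by norm_num) n

@[simp] lemma thueMorse_one : thueMorse 1 = true := by
  simpa using thueMorse_two_mul_add_one 0

lemma thueMorse_two_pow_mul_add {j r : ℕ} (hr : r < 2 ^ j) (n : ℕ) :
    thueMorse (2 ^ j * n + r) = (thueMorse n ^^ thueMorse r) := by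
  induction j generalizing r with
  | zero => simp_all
  | succ j ih =>
    obtain ⟨s, rfl | rfl⟩ := Nat.even_or_odd' r
    · rw [pow_succ', mul_assoc, ← mul_add, thueMorse_two_mul, thueMorse_two_mul, ih (by omega)]
    · rw [pow_succ', mul_assoc, ← add_assoc, ← mul_add, thueMorse_two_mul_add_one,
        thueMorse_two_mul_add_one, ih (by omega), Bool.xor_not]

lemma exists_thueMorse_eq (a : Bool) : ∃ n, thueMorse n = a := by
  cases a
  · exact ⟨0, thueMorse_zero⟩
  · exact ⟨1, thueMorse_one⟩

lemma exists_thueMorse_eq_and_add_eq (a b : Bool) {d : ℕ} (h : d ≠ 0 ∨ a = b) :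
    ∃ n, thueMorse n = a ∧ thueMorse (n + d) = b := by
  induction d using Nat.strong_induction_on generalizing a b with
  | _ d ih =>
  obtain ⟨e, rfl | rfl⟩ := Nat.even_or_odd' d
  · rcases Nat.eq_zero_or_pos e with rfl | he
    · obtain ⟨n, hn⟩ := exists_thueMorse_eq a
      exact ⟨n, hn, by simp_all⟩
    · obtain ⟨n, hn, hnd⟩ := ih e (by omega) a b (Or.inl he.ne')
      exact ⟨2 * n, by simpa, by rw [← mul_add]; simpa⟩
  · by_cases hab : e ≠ 0 ∨ a = !b
    · obtain ⟨n, hn, hnd⟩ := ih e (by omega) a (!b) hab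
      exact ⟨2 * n, by simpa, by rw [← add_assoc, ← mul_add]; simp [hnd]⟩
    · -- `a a` at distance one: `!a` at `n` gives `a a` at `4 n + 1`
      obtain ⟨rfl, rfl⟩ : e = 0 ∧ a = b := by cases a <;> cases b <;> simp_all
      obtain ⟨n, hn⟩ := exists_thueMorse_eq (!a)
      refine ⟨2 * (2 * n) + 1, by simp [hn], ?_⟩
      rw [show 2 * (2 * n) + 1 + (2 * 0 + 1) = 2 * (2 * n + 1) by ring]
      simp [hn]

lemma thueMorse_ne_or_ne_add_one (n : ℕ) :
    thueMorse n ≠ thueMorse (n + 1) ∨ thueMorse (n + 1) ≠ thueMorse (n + 2) := by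
  obtain ⟨j, rfl | rfl⟩ := Nat.even_or_odd' n
  · left; simp
  · right
    rw [show 2 * j + 1 + 1 = 2 * (j + 1) by ring, show 2 * j + 1 + 2 = 2 * (j + 1) + 1 by ring]
    simp

lemma not_thueMorse_palindrome_five (n : ℕ) :
    ¬ (thueMorse (n + 4) = thueMorse n ∧ thueMorse (n + 3) = thueMorse (n + 1)) := by
  rintro ⟨h4, h3⟩
  obtain ⟨j, rfl | rfl⟩ := Nat.even_or_odd' n
  · rw [show 2 * j + 4 = 2 * (j + 2) by ring] at h4
    rw [show 2 * j + 3 = 2 * (j + 1) + 1 by ring] at h3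
    simp only [thueMorse_two_mul, thueMorse_two_mul_add_one, Bool.not_inj_iff] at h4 h3
    rcases thueMorse_ne_or_ne_add_one j with h | h <;> simp_all
  · rw [show 2 * j + 1 + 4 = 2 * (j + 2) + 1 by ring] at h4
    rw [show 2 * j + 1 + 3 = 2 * (j + 2) by ring, show 2 * j + 1 + 1 = 2 * (j + 1) by ring] at h3
    simp only [thueMorse_two_mul, thueMorse_two_mul_add_one, Bool.not_inj_iff] at h4 h3
    rcases thueMorse_ne_or_ne_add_one j with h | h <;> simp_all

def thueMorseWindow (p k : ℕ) : List Bool := (List.range k).map fun i => thueMorse (p + i)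

@[simp] lemma length_thueMorseWindow (p k : ℕ) : (thueMorseWindow p k).length = k := by
  simp [thueMorseWindow]

lemma thueMorseWindow_add (p a b : ℕ) :
    thueMorseWindow p (a + b) = thueMorseWindow p a ++ thueMorseWindow (p + a) b := by
  simp [thueMorseWindow, List.range_add, add_assoc]

lemma thueMorseWindow_eq_append (p a n b : ℕ) :
    thueMorseWindow p (a + n + b) =
      thueMorseWindow p a ++ thueMorseWindow (p + a) n ++ thueMorseWindow (p + a + n) b := by
  rw [thueMorseWindow_add, thueMorseWindow_add, add_assoc]

@[simp] lemma thueMorseWindow_one (p : ℕ) : thueMorseWindow p 1 = [thueMorse p] := by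
  simp [thueMorseWindow]

@[simp] lemma thueMorseWindow_two (p : ℕ) :
    thueMorseWindow p 2 = [thueMorse p, thueMorse (p + 1)] := by
  simp [thueMorseWindow, List.range_succ]

lemma thueMorse_add_eq_of_reverse_eq {p k : ℕ}
    (h : (thueMorseWindow p k).reverse = thueMorseWindow p k) {i j : ℕ} (hij : i + j + 1 = k) :
    thueMorse (p + i) = thueMorse (p + j) := by
  have := congrArg (·[j]?) h
  simp only [thueMorseWindow, List.length_reverse, List.length_map, List.length_range,
    show j < k by omega, getElem?_pos, List.getElem_reverse, List.getElem_map, List.getElem_range,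
    Option.some.injEq] at this
  rwa [show k - 1 - j = i by omega] at this

lemma reverse_thueMorseWindow_ne_of_odd {p l : ℕ} (hl : Odd l) (h5 : 5 ≤ l) :
    (thueMorseWindow p l).reverse ≠ thueMorseWindow p l := by
  obtain ⟨L, rfl⟩ := hl
  intro h
  have hout := thueMorse_add_eq_of_reverse_eq h (i := L - 2) (j := L + 2) (by omega)
  have hin := thueMorse_add_eq_of_reverse_eq h (i := L - 1) (j := L + 1) (by omega)
  refine not_thueMorse_palindrome_five (p + (L - 2)) ⟨?_, ?_⟩
  · rw [show p + (L - 2) + 4 = p + (L + 2) by omega, hout]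
  · rw [show p + (L - 2) + 3 = p + (L + 1) by omega, show p + (L - 2) + 1 = p + (L - 1) by omega,
      hin]

lemma reverse_thueMorseWindow_ne_of_even {p L : ℕ} (h : Even (p + L)) :
    (thueMorseWindow p (2 * L + 2)).reverse ≠ thueMorseWindow p (2 * L + 2) := by
  intro hpal
  have := thueMorse_add_eq_of_reverse_eq hpal (i := L) (j := L + 1) (by ring)
  obtain ⟨c, hc⟩ := h
  rw [← add_assoc, hc, ← two_mul, thueMorse_two_mul_add_one] at this
  simp at this

@[simp] lemma tmMap_nil : tmMap [] = [] := rfl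

@[simp] lemma tmMap_cons (b : Bool) (w : List Bool) : tmMap (b :: w) = b :: (!b) :: tmMap w := by
  cases b <;> rfl

@[simp] lemma tmMap_append (u v : List Bool) : tmMap (u ++ v) = tmMap u ++ tmMap v :=
  List.flatMap_append

@[simp] lemma length_tmMap (w : List Bool) : (tmMap w).length = 2 * w.length := by
  induction w <;> simp_all; ring

lemma tmMap_injective : Function.Injective tmMap := by
  intro u
  induction u with
  | nil => rintro (_ | _) h <;> simp_all
  | cons a u ih =>
    rintro (_ | ⟨b, v⟩) h
    · simp at h
    · simp only [tmMap_cons, List.cons.injEq] at h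
      rw [h.1, ih h.2.2]

lemma map_not_tmMap (w : List Bool) : (tmMap w).map not = tmMap (w.map not) := by
  induction w <;> simp_all

lemma reverse_map_not_tmMap (w : List Bool) : ((tmMap w).map not).reverse = tmMap w.reverse := by
  induction w <;> simp_all

lemma reverse_tmMap (w : List Bool) : (tmMap w).reverse = tmMap (w.map not).reverse := by
  rw [← reverse_map_not_tmMap, map_not_tmMap, List.map_map]
  simp [Function.comp_def]

lemma reverse_map_not_tmMap_tmMap (w : List Bool) :
    ((tmMap (tmMap w)).map not).reverse = tmMap (tmMap (w.map not).reverse) := by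
  rw [reverse_map_not_tmMap, reverse_tmMap]

lemma tmMap_thueMorseWindow (p k : ℕ) :
    tmMap (thueMorseWindow p k) = thueMorseWindow (2 * p) (2 * k) := by
  induction k with
  | zero => rfl
  | succ k ih =>
    rw [thueMorseWindow_add, mul_add, thueMorseWindow_add, tmMap_append, ih, ← mul_add]
    simp

lemma tmMap_iterate_false (m : ℕ) : tmMap^[m] [false] = thueMorseWindow 0 (2 ^ m) := by
  induction m with
  | zero => rfl
  | succ m ih => rw [Function.iterate_succ_apply', ih, tmMap_thueMorseWindow, pow_succ', mul_zero]

lemma thueMorseWindow_infix {p k N : ℕ} (h : p + k ≤ N) :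
    thueMorseWindow p k <:+: thueMorseWindow 0 N := by
  obtain ⟨r, rfl⟩ := Nat.exists_eq_add_of_le h
  refine ⟨thueMorseWindow 0 p, thueMorseWindow (p + k) r, ?_⟩
  rw [thueMorseWindow_add, thueMorseWindow_add, zero_add, zero_add]

lemma factorTM_thueMorseWindow (p k : ℕ) : FactorTM (thueMorseWindow p k) :=
  ⟨p + k, by rw [tmMap_iterate_false]; exact thueMorseWindow_infix (Nat.lt_two_pow_self).le⟩

lemma factorTM_tmMap {w : List Bool} (h : FactorTM w) : FactorTM (tmMap w) := by
  obtain ⟨m, s, t, hst⟩ := h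
  exact ⟨m + 1, tmMap s, tmMap t, by rw [Function.iterate_succ_apply', ← hst]; simp⟩

lemma reverse_map_not_tmMap_iterate_false (j : ℕ) :
    ((tmMap^[2 * j + 1] [false]).map not).reverse = tmMap^[2 * j + 1] [false] := by
  induction j with
  | zero => rfl
  | succ j ih =>
    rw [show 2 * (j + 1) + 1 = 2 + (2 * j + 1) by ring, Function.iterate_add_apply,
      Function.iterate_succ_apply, Function.iterate_one, reverse_map_not_tmMap_tmMap, ih]

lemma factorTM_reverse_map_not {w : List Bool} (h : FactorTM w) :
    FactorTM (w.map not).reverse := by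
  obtain ⟨m, hm⟩ := h
  refine ⟨2 * m + 1, ?_⟩
  rw [← reverse_map_not_tmMap_iterate_false]
  refine (hm.trans ?_).map _ |>.reverse
  rw [tmMap_iterate_false, tmMap_iterate_false]
  exact thueMorseWindow_infix <| (zero_add _).trans_le <|
    Nat.pow_le_pow_right two_pos (show m ≤ 2 * m + 1 by omega)

lemma reverse_map_not_ne_of_odd_length {x : List Bool} (hx : Odd x.length) :
    (x.map not).reverse ≠ x := by
  obtain ⟨c, hc⟩ := hx
  intro h
  have := congrArg (·[c]?) h
  simp only [List.getElem?_reverse, List.length_map, hc, show c < 2 * c + 1 by omega,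
    List.getElem?_map, show 2 * c + 1 - 1 - c = c by omega] at this
  rw [List.getElem?_eq_getElem (by omega)] at this
  simp at this

lemma exists_factorTM_of_odd {n : ℕ} (hn : Odd n) (h3 : 3 ≤ n) :
    ∃ x : List Bool, x.length = n ∧ FactorTM ([false, true] ++ x ++ [false, true]) ∧
      (x.map not).reverse ≠ x := by
  obtain ⟨s, rfl⟩ := hn
  -- With `s + 3 = 4q + r`, the window of length `2s + 5` at `8i + 3` starts with `01` since
  -- `t i = 0`, and ends with `θ(t (4(i+q) + r)) = θ(0) = 01`.
  obtain ⟨i, hi, hiq⟩ := exists_thueMorse_eq_and_add_eq false (thueMorse ((s + 3) % 4))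
    (d := (s + 3) / 4) (Or.inl (by omega))
  refine ⟨thueMorseWindow (8 * i + 3 + 2) (2 * s + 1), length_thueMorseWindow .., ?_,
    reverse_map_not_ne_of_odd_length (by simp)⟩
  have hstart : thueMorse (8 * i + 3) = false ∧ thueMorse (8 * i + 3 + 1) = true := by
    rw [show 8 * i + 3 = 2 ^ 3 * i + 3 by ring, add_assoc,
      thueMorse_two_pow_mul_add (by norm_num), thueMorse_two_pow_mul_add (by norm_num), hi]
    constructor <;> decide
  have hend : thueMorse (4 * (i + (s + 3) / 4) + (s + 3) % 4) = false := by
    rw [show 4 * (i + (s + 3) / 4) = 2 ^ 2 * (i + (s + 3) / 4) by norm_num,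
      thueMorse_two_pow_mul_add (show (s + 3) % 4 < 2 ^ 2 by omega), hiq,
      Bool.xor_self]
  have hpos : 8 * i + 3 + 2 + (2 * s + 1) = 2 * (4 * (i + (s + 3) / 4) + (s + 3) % 4) := by
    omega
  convert factorTM_thueMorseWindow (8 * i + 3) (2 + (2 * s + 1) + 2) using 1
  rw [thueMorseWindow_eq_append, thueMorseWindow_two, thueMorseWindow_two, hpos,
    thueMorse_two_mul, thueMorse_two_mul_add_one, hend, hstart.1, hstart.2]
  rfl

lemma exists_factorTM_of_reverse_thueMorseWindow_ne {m n : ℕ} (h0 : thueMorse m = false)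
    (h1 : thueMorse (m + n + 1) = false)
    (hpal : (thueMorseWindow m (n + 2)).reverse ≠ thueMorseWindow m (n + 2)) :
    ∃ x : List Bool, x.length = 2 * n ∧ FactorTM ([false, true] ++ x ++ [false, true]) ∧
      (x.map not).reverse ≠ x := by
  have hU : thueMorseWindow m (n + 2) = [false] ++ thueMorseWindow (m + 1) n ++ [false] := by
    rw [show n + 2 = 1 + n + 1 by ring, thueMorseWindow_eq_append, thueMorseWindow_one,
      thueMorseWindow_one, h0, add_right_comm, h1]
  refine ⟨tmMap (thueMorseWindow (m + 1) n), by simp, ?_, ?_⟩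
  · simpa [hU] using factorTM_tmMap (factorTM_thueMorseWindow m (n + 2))
  · rw [reverse_map_not_tmMap]
    refine tmMap_injective.ne fun h ↦ hpal ?_
    simp [hU, h]

lemma exists_thueMorse_even_add_and_eq_false {L : ℕ} (hL : 1 ≤ L) :
    ∃ m, Even (m + L) ∧ thueMorse m = false ∧ thueMorse (m + 2 * L + 1) = false := by
  rcases Nat.even_or_odd L with hL2 | hL2
  · obtain ⟨c, hc, hcL⟩ :=
      exists_thueMorse_eq_and_add_eq false true (d := L) (Or.inl (by omega))
    refine ⟨2 * c, by simpa [Nat.even_add], by simpa, ?_⟩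
    rw [show 2 * c + 2 * L + 1 = 2 * (c + L) + 1 by ring, thueMorse_two_mul_add_one, hcL]; rfl
  · obtain ⟨c, hc, hcL⟩ :=
      exists_thueMorse_eq_and_add_eq true false (d := L + 1) (Or.inl (by omega))
    refine ⟨2 * c + 1, by simpa [Nat.even_add] using hL2, by simp [hc], ?_⟩
    rw [show 2 * c + 1 + 2 * L + 1 = 2 * (c + (L + 1)) by ring, thueMorse_two_mul, hcL]

lemma exists_factorTM_of_even {l : ℕ} (hl : 4 ≤ l) :
    ∃ x : List Bool, x.length = 2 * l - 4 ∧ FactorTM ([false, true] ++ x ++ [false, true]) ∧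
      (x.map not).reverse ≠ x := by
  obtain ⟨L, rfl | rfl⟩ := Nat.even_or_odd' l
  · obtain ⟨L, rfl⟩ := Nat.exists_eq_add_of_le' (show 1 ≤ L by omega)
    obtain ⟨m, hev, h0, h1⟩ := exists_thueMorse_even_add_and_eq_false (L := L) (by omega)
    obtain ⟨x, hx, hfac, hne⟩ := exists_factorTM_of_reverse_thueMorseWindow_ne h0 h1
      (reverse_thueMorseWindow_ne_of_even hev)
    exact ⟨x, by omega, hfac, hne⟩
  · obtain ⟨L, rfl⟩ := Nat.exists_eq_add_of_le' (show 2 ≤ L by omega)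
    obtain ⟨m, h0, h1⟩ := exists_thueMorse_eq_and_add_eq false false (d := 2 * L + 4) (Or.inr rfl)
    obtain ⟨x, hx, hfac, hne⟩ := exists_factorTM_of_reverse_thueMorseWindow_ne (n := 2 * L + 3)
      h0 h1 (reverse_thueMorseWindow_ne_of_odd ⟨L + 2, by ring⟩ (by omega))
    exact ⟨x, by omega, hfac, hne⟩

lemma exists_factorTM_zero_one_append_zero_one {k : ℕ} (hk : 7 ≤ k) :
    ∃ x : List Bool, x.length + 4 = k ∧ FactorTM ([false, true] ++ x ++ [false, true]) ∧
      (x.map not).reverse ≠ x := by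
  obtain ⟨l, rfl | rfl⟩ := Nat.even_or_odd' k
  · obtain ⟨x, hx, hfac, hne⟩ := exists_factorTM_of_even (l := l) (by omega)
    exact ⟨x, by omega, hfac, hne⟩
  · obtain ⟨l, rfl⟩ := Nat.exists_eq_add_of_le' (show 3 ≤ l by omega)
    obtain ⟨x, hx, hfac, hne⟩ := exists_factorTM_of_odd (n := 2 * l + 3) ⟨l + 1, by ring⟩ (by omega)
    exact ⟨x, by omega, hfac, hne⟩

theorem stmt2 (k : ℕ) (hk : 7 ≤ k) :
    ∃ x y : List Bool, x ≠ y ∧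
      ([false, true] ++ x ++ [false, true]).length = k ∧
      ([false, true] ++ y ++ [false, true]).length = k ∧
      FactorTM ([false, true] ++ x ++ [false, true]) ∧
      FactorTM ([false, true] ++ y ++ [false, true]) := by
  obtain ⟨x, hx, hfac, hne⟩ := exists_factorTM_zero_one_append_zero_one hk
  refine ⟨x, (x.map not).reverse, hne.symm, by simp; omega, by simp; omega, hfac, ?_⟩
  simpa using factorTM_reverse_map_not hfac
end

section
/- Let k ≥ 5 be an integer and let w₀, w₁ be two distinct cubefree binary words of length k + 4, each having 00 as a prefix and 11 as a suffix. Then for each i ∈ {0,1} the word θ(w_i) ends in 010, and the morphism φ : {0,1}* → {0,1}* defined by letting φ(i) be θ(w_i) with the suffix 010 removed is a cubefree morphism (of uniform length 2k + 5). -/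
namespace CFAux

lemma getD_take (l : List Bool) (n i : ℕ) (h : i < n) :
    (l.take n).getD i false = l.getD i false := by
  simp [List.getD_eq_getElem?_getD, List.getElem?_take, h]

lemma getD_drop (l : List Bool) (p i : ℕ) :
    (l.drop p).getD i false = l.getD (p+i) false := by
  simp [List.getD_eq_getElem?_getD, List.getElem?_drop]

lemma xxx_getD (x : List Bool) (i : ℕ) (hi : i < 3 * x.length) :
    (x ++ x ++ x).getD i false = x.getD (i % x.length) false := by
  rw [List.append_assoc]
  rcases Nat.lt_or_ge i x.length with h | h
  · rw [List.getD_append _ _ _ _ h, Nat.mod_eq_of_lt h]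
  rw [List.getD_append_right _ _ _ _ h, Nat.mod_eq_sub_mod h]
  rcases Nat.lt_or_ge (i - x.length) x.length with h2 | h2
  · rw [List.getD_append _ _ _ _ h2, Nat.mod_eq_of_lt h2]
  · rw [List.getD_append_right _ _ _ _ h2, Nat.mod_eq_sub_mod h2,
      Nat.mod_eq_of_lt (by omega)]

lemma periodic_getD (v : List Bool) (P Q : ℕ) (hQ : 1 ≤ Q)
    (hper : ∀ t, t < 2*Q → v.getD (P+t) false = v.getD (P+t+Q) false) :
    ∀ i, i < 3*Q → v.getD (P+i) false = ((v.drop P).take Q).getD (i % Q) false := by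
  intro i hi
  induction i using Nat.strong_induction_on with
  | _ i ih =>
    rcases Nat.lt_or_ge i Q with h | h
    · rw [Nat.mod_eq_of_lt h, getD_take _ _ _ h, getD_drop]
    · have h1 : v.getD (P + (i - Q)) false = v.getD (P + (i-Q) + Q) false :=
        hper (i - Q) (by omega)
      have h2 : P + (i - Q) + Q = P + i := by omega
      rw [h2] at h1
      rw [← h1, ih (i - Q) (by omega) (by omega), Nat.mod_eq_sub_mod h]

lemma cf_index (v : List Bool) (hv : Cubefree v) :
    ∀ P Q, 1 ≤ Q → P + 3*Q ≤ v.length →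
      ∃ t, t < 2*Q ∧ v.getD (P+t) false ≠ v.getD (P+t+Q) false := by
  intro P Q hQ hle
  by_contra hcon
  push_neg at hcon
  set x : List Bool := (v.drop P).take Q with hxdef
  have hxlen : x.length = Q := by
    simp [hxdef]
    omega
  have hper := periodic_getD v P Q hQ (fun t ht => hcon t ht)
  have heq : (v.drop P).take (3*Q) = x ++ x ++ x := by
    apply List.ext_getElem
    · simp [hxlen]
      omega
    · intro i h1 h2
      have hi : i < 3*Q := by simp at h1; omega
      have l1 : ((v.drop P).take (3*Q))[i] = v.getD (P+i) false := by
        rw [← List.getD_eq_getElem, getD_take _ _ _ hi, getD_drop]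
      have l2 : (x ++ x ++ x)[i] = x.getD (i % Q) false := by
        rw [← List.getD_eq_getElem, xxx_getD x i (by omega : i < 3 * x.length), hxlen]
      rw [l1, l2, hper i hi]
  have hinf : (x ++ x ++ x) <:+: v := by
    rw [← heq]
    exact (List.take_prefix (3*Q) (v.drop P)).isInfix.trans (List.drop_suffix P v).isInfix
  exact hv x (by
    intro h
    rw [h] at hxlen
    simp at hxlen
    omega) hinf

lemma index_cf (v : List Bool)
    (h : ∀ P Q, 1 ≤ Q → P + 3*Q ≤ v.length →
      ∃ t, t < 2*Q ∧ v.getD (P+t) false ≠ v.getD (P+t+Q) false) :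
    Cubefree v := by
  rintro x hx ⟨s, t, heq⟩
  have hQ : 1 ≤ x.length := List.length_pos_iff.mpr hx
  have hlen : s.length + 3*x.length ≤ v.length := by
    have := congrArg List.length heq
    simp at this
    omega
  obtain ⟨t₀, ht₀, hne⟩ := h s.length x.length hQ hlen
  apply hne
  have key : ∀ i, i < 3*x.length → v.getD (s.length + i) false = x.getD (i % x.length) false := by
    intro i hi
    rw [← heq, List.append_assoc, List.getD_append_right _ _ _ _ (by omega), List.append_assoc]
    have h3 : s.length + i - s.length = i := by omega
    rw [h3, ← List.append_assoc]
    rw [List.getD_append _ _ _ _ (by simp; omega)]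
    exact xxx_getD x i hi
  have h4 : s.length + t₀ + x.length = s.length + (t₀ + x.length) := by omega
  rw [key t₀ (by omega), h4, key (t₀ + x.length) (by omega)]
  congr 1
  rw [Nat.mod_eq_sub_mod (by omega : x.length ≤ t₀ + x.length)]
  congr 1
  omega


lemma tmMap_length (v : List Bool) : (tmMap v).length = 2 * v.length := by
  induction v with
  | nil => rfl
  | cons a t ih =>
    show ((if a then [true,false] else [false,true]) ++ tmMap t).length = _
    cases a <;> simp [ih] <;> omega

lemma tm_getD (v : List Bool) : ∀ z, z < 2 * v.length →
    (tmMap v).getD z false =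
      (if z % 2 = 0 then v.getD (z/2) false else !(v.getD (z/2) false)) := by
  induction v with
  | nil => intro z hz; simp at hz
  | cons a t ih =>
    intro z hz
    have hcons : tmMap (a :: t) = (if a then [true,false] else [false,true]) ++ tmMap t := rfl
    match z with
    | 0 => rw [hcons]; cases a <;> simp
    | 1 => rw [hcons]; cases a <;> simp
    | (z+2) =>
      rw [hcons, List.getD_append_right _ _ _ _ (by cases a <;> simp)]
      have h2 : z + 2 - (if a then [true,false] else [false,true]).length = z := by
        cases a <;> simp
      rw [h2, ih z (by simp at hz; omega)]
      have h3 : (z+2) % 2 = z % 2 := by omega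
      have h4 : (z+2) / 2 = z/2 + 1 := by omega
      rw [h3, h4]
      simp

lemma flatMap_length (L : ℕ) (h : Bool → List Bool) (hl : ∀ b, (h b).length = L) :
    ∀ w : List Bool, (w.flatMap h).length = w.length * L := by
  intro w
  induction w with
  | nil => simp
  | cons a t ih =>
    rw [List.flatMap_cons]
    have : (t.length + 1) * L = t.length * L + L := by ring
    simp [ih, hl]
    omega

lemma flatMap_getD (L : ℕ) (hL : 0 < L) (h : Bool → List Bool) (hl : ∀ b, (h b).length = L) :
    ∀ (w : List Bool) (j : ℕ), j < w.length * L →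
      (w.flatMap h).getD j false = (h (w.getD (j/L) false)).getD (j%L) false := by
  intro w
  induction w with
  | nil => intro j hj; simp at hj
  | cons a t ih =>
    intro j hj
    have hexp : (t.length + 1) * L = t.length * L + L := by ring
    have hj' : j < t.length * L + L := by
      simp at hj; omega
    rw [List.flatMap_cons]
    rcases Nat.lt_or_ge j L with hjL | hjL
    · rw [List.getD_append _ _ _ _ (by rw [hl]; exact hjL)]
      rw [Nat.div_eq_of_lt hjL, Nat.mod_eq_of_lt hjL]
      simp
    · rw [List.getD_append_right _ _ _ _ (by rw [hl]; exact hjL), hl]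
      rw [ih (j-L) (by omega)]
      have h1 : j / L = (j-L)/L + 1 := by
        have := Nat.add_div_right (j-L) hL
        have h0 : j - L + L = j := by omega
        rw [h0] at this
        omega
      have h2 : j % L = (j-L) % L := by
        conv_lhs => rw [show j = (j - L) + L by omega]
        rw [Nat.add_mod_right]
      rw [h1, h2]
      simp


def ug (Y : Bool → ℕ → Bool) (b : Bool) (z : ℕ) : Bool :=
  if z % 2 = 0 then Y b (z/2) else !(Y b (z/2))

def gfun (k : ℕ) (Y : Bool → ℕ → Bool) (C : ℕ → Bool) (j : ℕ) : Bool :=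
  ug Y (C (j/(2*k+5))) (j % (2*k+5))

lemma ug_even (Y : Bool → ℕ → Bool) (b : Bool) (z : ℕ) (h : z % 2 = 0) :
    ug Y b z = Y b (z/2) := by simp [ug, h]

lemma ug_odd (Y : Bool → ℕ → Bool) (b : Bool) (z : ℕ) (h : z % 2 = 1) :
    ug Y b z = !(Y b (z/2)) := by simp [ug, h]

lemma ug_period (Y : Bool → ℕ → Bool) (b : Bool) (Q z : ℕ)
    (h : ug Y b z = ug Y b (z + 2*Q)) : Y b (z/2) = Y b (z/2 + Q) := by
  have h2 : (z + 2*Q) / 2 = z/2 + Q := by omega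
  rcases Nat.mod_two_eq_zero_or_one z with hz | hz
  · rw [ug_even _ _ _ hz, ug_even _ _ _ (by omega), h2] at h; exact h
  · rw [ug_odd _ _ _ hz, ug_odd _ _ _ (by omega), h2] at h
    simpa using h

structure YC (k : ℕ) (Y : Bool → ℕ → Bool) : Prop where
  hk : 5 ≤ k
  y0 : ∀ b, Y b 0 = false
  y1 : ∀ b, Y b 1 = false
  y2 : ∀ b, Y b 2 = true
  yk1 : ∀ b, Y b (k+1) = false
  yk2 : ∀ b, Y b (k+2) = true
  yk3 : ∀ b, Y b (k+3) = true
  ycf : ∀ (b : Bool) P Q, 1 ≤ Q → P + 3*Q ≤ k+4 →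
          ∃ t, t < 2*Q ∧ Y b (P+t) ≠ Y b (P+t+Q)
  hne : ∃ i, i ≤ k+2 ∧ Y false i ≠ Y true i

variable {k : ℕ} {Y : Bool → ℕ → Bool} {C : ℕ → Bool}

lemma gval (hY : YC k Y) (C : ℕ → Bool) (m r : ℕ) (hr : r < 2*k+5) :
    gfun k Y C ((2*k+5)*m + r) = ug Y (C m) r := by
  unfold gfun
  rw [Nat.mul_add_div (by omega), Nat.mul_add_mod, Nat.div_eq_of_lt hr,
    Nat.mod_eq_of_lt hr, Nat.add_zero]

lemma jdecomp (k : ℕ) (j : ℕ) : ∃ m r, r < 2*k+5 ∧ j = (2*k+5)*m + r :=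
  ⟨j/(2*k+5), j % (2*k+5), Nat.mod_lt _ (by omega), by rw [Nat.div_add_mod]⟩

lemma modval (k : ℕ) (m r : ℕ) (hr : r < 2*k+5) :
    ((2*k+5)*m + r) % (2*k+5) = r := by
  rw [Nat.mul_add_mod, Nat.mod_eq_of_lt hr]

/-- no aaa in any Y-word -/
lemma no3 (hY : YC k Y) (b : Bool) (i : ℕ) (hi : i + 2 ≤ k + 3) :
    Y b i ≠ Y b (i+1) ∨ Y b (i+1) ≠ Y b (i+2) := by
  by_contra hcon
  push_neg at hcon
  obtain ⟨t, ht, hne⟩ := hY.ycf b i 1 le_rfl (by omega)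
  rcases (by omega : t = 0 ∨ t = 1) with rfl | rfl
  · exact hne (by rw [show i+0 = i by omega, show i+0+1 = i+1 by omega, hcon.1])
  · exact hne (by rw [show i+1+1 = i+2 by omega, hcon.2])

/-- equal adjacent letters in the image happen only at odd in-block positions, and not at 1 -/
lemma lem_pair (hY : YC k Y) (C : ℕ → Bool) (j : ℕ)
    (hp : gfun k Y C j = gfun k Y C (j+1)) :
    (j % (2*k+5)) % 2 = 1 ∧ j % (2*k+5) ≠ 1 := by
  obtain ⟨m, r, hr, hj⟩ := jdecomp k j
  have hmod : j % (2*k+5) = r := by rw [hj, modval k m r hr]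
  rw [hmod]
  rcases Nat.lt_or_ge r (2*k+4) with hrl | hrl
  · have e1 : gfun k Y C j = ug Y (C m) r := by rw [hj]; exact gval hY C m r hr
    have e2 : gfun k Y C (j+1) = ug Y (C m) (r+1) := by
      rw [hj, show (2*k+5)*m + r + 1 = (2*k+5)*m + (r+1) by omega]
      exact gval hY C m (r+1) (by omega)
    rw [e1, e2] at hp
    constructor
    · by_contra hodd
      have hr2 : r % 2 = 0 := by omega
      rw [ug_even _ _ _ hr2, ug_odd _ _ _ (by omega), show (r+1)/2 = r/2 by omega] at hp
      simp at hp
    · intro h1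
      rw [h1] at hp
      rw [ug_odd _ _ 1 rfl, ug_even _ _ 2 rfl] at hp
      norm_num at hp
      rw [hY.y0, hY.y1] at hp
      simp at hp
  · exfalso
    have hr1 : r = 2*k+4 := by omega
    have e1 : gfun k Y C j = ug Y (C m) (2*k+4) := by
      rw [hj, hr1]; exact gval hY C m _ (by omega)
    have e2 : gfun k Y C (j+1) = ug Y (C (m+1)) 0 := by
      rw [hj, hr1, show (2*k+5)*m + (2*k+4) + 1 = (2*k+5)*(m+1) + 0 by ring]
      exact gval hY C (m+1) 0 (by omega)
    rw [e1, e2, ug_even _ _ _ (by omega), ug_even _ _ _ (by omega),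
      show (2*k+4)/2 = k+2 by omega, show (0:ℕ)/2 = 0 by omega,
      hY.yk2, hY.y0] at hp
    simp at hp

/-- an inequality of adjacent Y-letters gives a pair in the image -/
lemma pair_of_ne (hY : YC k Y) (C : ℕ → Bool) (m i : ℕ) (hi : 2*i+2 ≤ 2*k+4)
    (hne : Y (C m) i ≠ Y (C m) (i+1)) :
    gfun k Y C ((2*k+5)*m + (2*i+1)) = gfun k Y C ((2*k+5)*m + (2*i+1) + 1) := by
  rw [gval hY C m _ (by omega), show (2*k+5)*m + (2*i+1) + 1 = (2*k+5)*m + (2*i+2) by omega,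
    gval hY C m _ (by omega), ug_odd _ _ _ (by omega), ug_even _ _ _ (by omega),
    show (2*i+1)/2 = i by omega, show (2*i+2)/2 = i+1 by omega]
  revert hne
  cases (Y (C m) i) <;> cases (Y (C m) (i+1)) <;> simp

/-- the canonical pairs: at in-block positions 2k+3 and 3 -/
lemma pair_end (hY : YC k Y) (C : ℕ → Bool) (m : ℕ) :
    gfun k Y C ((2*k+5)*m + (2*k+3)) = gfun k Y C ((2*k+5)*m + (2*k+3) + 1) := by
  have := pair_of_ne hY C m (k+1) (by omega) (by rw [hY.yk1, hY.yk2]; simp)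
  rw [show 2*(k+1)+1 = 2*k+3 by omega] at this
  exact this

lemma pair_three (hY : YC k Y) (C : ℕ → Bool) (m : ℕ) :
    gfun k Y C ((2*k+5)*m + 3) = gfun k Y C ((2*k+5)*m + 3 + 1) := by
  have := pair_of_ne hY C m 1 (by omega) (by rw [hY.y1, hY.y2]; simp)
  rw [show 2*1+1 = 3 by omega] at this
  exact this

/-- pair density: any 5 consecutive positions contain a pair -/
lemma lem_pair_exists (hY : YC k Y) (C : ℕ → Bool) (j : ℕ) :
    ∃ d, d ≤ 4 ∧ gfun k Y C (j+d) = gfun k Y C (j+d+1) := by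
  obtain ⟨m, r, hr, hj⟩ := jdecomp k j
  rcases Nat.lt_or_ge r (2*k+2) with hr1 | hr1
  · -- interior: use no3 at i = r/2
    set i := r/2 with hi
    have hineq : i ≤ k := by omega
    rcases no3 hY (C m) i (by omega) with hne | hne
    · refine ⟨2*i+1 - r, by omega, ?_⟩
      rw [hj, show (2*k+5)*m + r + (2*i+1-r) = (2*k+5)*m + (2*i+1) by omega]
      exact pair_of_ne hY C m i (by omega) hne
    · refine ⟨2*i+3 - r, by omega, ?_⟩
      rw [hj, show (2*k+5)*m + r + (2*i+3-r) = (2*k+5)*m + (2*(i+1)+1) by omega]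
      exact pair_of_ne hY C m (i+1) (by omega) hne
  rcases Nat.lt_or_ge r (2*k+4) with hr2 | hr2
  · -- r ∈ {2k+2, 2k+3}: use pair at 2k+3
    refine ⟨2*k+3 - r, by omega, ?_⟩
    rw [hj, show (2*k+5)*m + r + (2*k+3-r) = (2*k+5)*m + (2*k+3) by omega]
    exact pair_end hY C m
  · -- r = 2k+4: pair at 3 in the next block
    refine ⟨4, by omega, ?_⟩
    have hr4 : r = 2*k+4 := by omega
    subst hr4
    rw [hj, show (2*k+5)*m + (2*k+4) + 4 = (2*k+5)*(m+1) + 3 by ring]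
    exact pair_three hY C (m+1)
  
lemma modadd (k : ℕ) (x d : ℕ) (hd : d < 2*k+5) :
    (x + d) % (2*k+5) = (x % (2*k+5) + d) % (2*k+5) := by
  rw [Nat.add_mod, Nat.mod_eq_of_lt hd]

/-- two pairs at distance 5 pin the block boundary -/
lemma lem_dist5 (hY : YC k Y) (C : ℕ → Bool) (j : ℕ)
    (h1 : gfun k Y C j = gfun k Y C (j+1))
    (h2 : gfun k Y C (j+5) = gfun k Y C (j+5+1)) :
    j % (2*k+5) = 2*k+3 := by
  obtain ⟨ho1, hn1⟩ := lem_pair hY C j h1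
  obtain ⟨ho2, hn2⟩ := lem_pair hY C (j+5) h2
  have hm : (j+5) % (2*k+5) = (j % (2*k+5) + 5) % (2*k+5) := modadd k j 5 (by have := hY.hk; omega)
  set r := j % (2*k+5) with hr
  have hrlt : r < 2*k+5 := Nat.mod_lt _ (by omega)
  rcases Nat.lt_or_ge (r+5) (2*k+5) with hc | hc
  · rw [Nat.mod_eq_of_lt hc] at hm
    rw [hm] at ho2 hn2
    omega
  · have h9 : (r+5) % (2*k+5) = r + 5 - (2*k+5) := by
      rw [Nat.mod_eq_sub_mod (by omega), Nat.mod_eq_of_lt (by omega)]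
    rw [h9] at hm
    rw [hm] at ho2 hn2
    omega

lemma lem_sync (hY : YC k Y) (C : ℕ → Bool) (t : ℕ) (e : Bool)
    (hocc : ∀ i, i < 2*k+5 → gfun k Y C (t+i) = ug Y e i) :
    t % (2*k+5) = 0 := by
  have p1 : gfun k Y C (t+3) = gfun k Y C (t+3+1) := by
    rw [hocc 3 (by omega), show t+3+1 = t+4 by omega, hocc 4 (by omega),
      ug_odd _ _ 3 (by omega), ug_even _ _ 4 (by omega),
      show (3:ℕ)/2 = 1 by omega, show (4:ℕ)/2 = 2 by omega, hY.y1, hY.y2]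
    rfl
  have p2 : gfun k Y C (t+(2*k+3)) = gfun k Y C (t+(2*k+3)+1) := by
    rw [hocc (2*k+3) (by omega), show t+(2*k+3)+1 = t+(2*k+4) by omega,
      hocc (2*k+4) (by omega), ug_odd _ _ _ (by omega), ug_even _ _ _ (by omega),
      show (2*k+3)/2 = k+1 by omega, show (2*k+4)/2 = k+2 by omega, hY.yk1, hY.yk2]
    rfl
  obtain ⟨ho1, hn1⟩ := lem_pair hY C (t+3) p1
  obtain ⟨ho2, hn2⟩ := lem_pair hY C (t+(2*k+3)) p2
  have hm1 : (t+3) % (2*k+5) = (t % (2*k+5) + 3) % (2*k+5) := modadd k t 3 (by omega)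
  have hm2 : (t+(2*k+3)) % (2*k+5) = (t % (2*k+5) + (2*k+3)) % (2*k+5) :=
    modadd k t (2*k+3) (by omega)
  set s := t % (2*k+5) with hs
  have hslt : s < 2*k+5 := Nat.mod_lt _ (by omega)
  by_contra hs0
  -- evaluate the two mods
  have e1 : (s + 3) % (2*k+5) = if s + 3 < 2*k+5 then s+3 else s+3-(2*k+5) := by
    split
    · rw [Nat.mod_eq_of_lt]; omega
    · rw [Nat.mod_eq_sub_mod (by omega), Nat.mod_eq_of_lt (by omega)]
  have e2 : (s + (2*k+3)) % (2*k+5) = if s + (2*k+3) < 2*k+5 then s+(2*k+3)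
      else s+(2*k+3)-(2*k+5) := by
    split
    · rw [Nat.mod_eq_of_lt]; omega
    · rw [Nat.mod_eq_sub_mod (by omega), Nat.mod_eq_of_lt (by omega)]
  rw [e1] at hm1
  rw [e2] at hm2
  split at hm1 <;> split at hm2 <;> omega

/-- if two blocks have identical image words, the block letters agree -/
lemma lem_blockeq (hY : YC k Y) (C : ℕ → Bool) (m m' : ℕ)
    (h : ∀ i, i < 2*k+5 → ug Y (C m) i = ug Y (C m') i) : C m = C m' := by
  by_contra hcm
  obtain ⟨i0, hi0, hne0⟩ := hY.hne
  have h2 := h (2*i0) (by omega)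
  rw [ug_even _ _ _ (by omega), ug_even _ _ _ (by omega),
    show (2*i0)/2 = i0 by omega] at h2
  rcases Bool.eq_false_or_eq_true (C m) with h3 | h3 <;>
    rcases Bool.eq_false_or_eq_true (C m') with h4 | h4 <;>
      rw [h3, h4] at h2 hcm <;>
        first
          | exact hcm rfl
          | exact hne0 h2
          | exact hne0 h2.symm



lemma ug_ne_flip {Y : Bool → ℕ → Bool} (b1 b2 : Bool) (hne : b1 ≠ b2) (x : ℕ)
    (h : ug Y b1 x = ug Y b2 x) : ug Y false x = ug Y true x := by
  cases b1 <;> cases b2 <;> first | exact h | exact h.symm | exact absurd rfl hne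

lemma sync_d (hY : YC k Y) (C : ℕ → Bool) (p q : ℕ)
    (E : ∀ i, i < 2*q → gfun k Y C (p+i) = gfun k Y C (p+i+q))
    (hqL : 2*k+5 ≤ q) (a : ℕ)
    (h1 : p ≤ (2*k+5)*a) (h2 : (2*k+5)*a ≤ p + (2*k+4)) :
    q % (2*k+5) = 0 := by
  have hocc : ∀ i, i < 2*k+5 → gfun k Y C ((2*k+5)*a + q + i) = ug Y (C a) i := by
    intro i hi
    have hE := E ((2*k+5)*a + i - p) (by omega)
    rw [show p + ((2*k+5)*a + i - p) = (2*k+5)*a + i by omega] at hE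
    rw [show (2*k+5)*a + q + i = (2*k+5)*a + i + q by omega, ← hE, gval hY C a i hi]
  have := lem_sync hY C ((2*k+5)*a + q) (C a) hocc
  rw [show (2*k+5)*a + q = q + (2*k+5)*a by omega, Nat.add_mul_mod_self_left] at this
  exact this

lemma blockeq_d (hY : YC k Y) (C : ℕ → Bool) (p q : ℕ)
    (E : ∀ i, i < 2*q → gfun k Y C (p+i) = gfun k Y C (p+i+q))
    (d : ℕ) (hd : q = (2*k+5)*d) (m : ℕ)
    (h1 : p ≤ (2*k+5)*m) (h2 : (2*k+5)*(m+1) ≤ p + 2*q) :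
    C m = C (m+d) := by
  apply lem_blockeq hY C
  intro i hi
  have hexp : (2*k+5)*(m+1) = (2*k+5)*m + (2*k+5) := by ring
  have hE := E ((2*k+5)*m + i - p) (by omega)
  rw [show p + ((2*k+5)*m + i - p) = (2*k+5)*m + i by omega] at hE
  have hmd : (2*k+5)*m + i + q = (2*k+5)*(m+d) + i := by rw [hd]; ring
  rw [hmd] at hE
  rw [← gval hY C m i hi, ← gval hY C (m+d) i hi]
  exact hE

lemma case_big (hY : YC k Y) (C : ℕ → Bool) (N p q : ℕ) (hq : 1 ≤ q)
    (hle : p + 3*q ≤ N*(2*k+5))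
    (Cw : ∀ P Q, 1 ≤ Q → P + 3*Q ≤ N → ∃ t, t < 2*Q ∧ C (P+t) ≠ C (P+t+Q))
    (E : ∀ i, i < 2*q → gfun k Y C (p+i) = gfun k Y C (p+i+q))
    (hqL : 2*k+5 ≤ q) : False := by
  have hk5 := hY.hk
  obtain ⟨m₀, rp, hrp, hdm⟩ : ∃ m r, r < 2*k+5 ∧ p = (2*k+5)*m + r := jdecomp k p
  have XN : (2*k+5)*N = N*(2*k+5) := by ring
  rcases Nat.eq_zero_or_pos rp with hrp0 | hrp0
  · -- aligned case
    rw [hrp0, Nat.add_zero] at hdm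
    have hmod := sync_d hY C p q E hqL m₀ (by omega) (by omega)
    obtain ⟨d, hd⟩ : ∃ d, q = (2*k+5)*d := ⟨q/(2*k+5), by
      rw [Nat.mul_div_cancel' (Nat.dvd_of_mod_eq_zero hmod)]⟩
    have hd1 : 1 ≤ d := by
      rcases Nat.eq_zero_or_pos d with h | h
      · rw [h] at hd; omega
      · exact h
    have hNbound : m₀ + 3*d ≤ N := by
      have hexp : (2*k+5)*(m₀ + 3*d) = p + 3*q := by rw [hdm, hd]; ring
      have h9 : (2*k+5)*(m₀+3*d) ≤ (2*k+5)*N := by omega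
      exact Nat.le_of_mul_le_mul_left h9 (by omega)
    obtain ⟨t, ht, hCt⟩ := Cw m₀ d hd1 hNbound
    apply hCt
    apply blockeq_d hY C p q E d hd (m₀+t)
    · have : (2*k+5)*m₀ ≤ (2*k+5)*(m₀+t) := Nat.mul_le_mul_left _ (by omega)
      omega
    · have e1 : (2*k+5)*(m₀+t+1) ≤ (2*k+5)*(m₀+2*d) := Nat.mul_le_mul_left _ (by omega)
      have e2 : (2*k+5)*(m₀+2*d) = p + 2*q := by rw [hdm, hd]; ring
      omega
  · -- unaligned case
    have X1 : (2*k+5)*(m₀+1) = (2*k+5)*m₀ + (2*k+5) := by ring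
    have hmod := sync_d hY C p q E hqL (m₀+1) (by omega) (by omega)
    obtain ⟨d, hd⟩ : ∃ d, q = (2*k+5)*d := ⟨q/(2*k+5), by
      rw [Nat.mul_div_cancel' (Nat.dvd_of_mod_eq_zero hmod)]⟩
    have hd1 : 1 ≤ d := by
      rcases Nat.eq_zero_or_pos d with h | h
      · rw [h] at hd; omega
      · exact h
    have X2 : (2*k+5)*(m₀+1+2*d) = (2*k+5)*m₀ + (2*k+5) + (2*k+5)*(2*d) := by ring
    have X2q : 2*q = (2*k+5)*(2*d) := by rw [hd]; ring
    have X3q : 3*q = (2*k+5)*(3*d) := by rw [hd]; ring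
    have X3 : (2*k+5)*(m₀+3*d) = (2*k+5)*m₀ + (2*k+5)*(3*d) := by ring
    have X4 : (2*k+5)*(m₀+1+3*d) = (2*k+5)*m₀ + (2*k+5) + (2*k+5)*(3*d) := by ring
    have X5 : (2*k+5)*(m₀+2*d) = (2*k+5)*m₀ + (2*k+5)*(2*d) := by ring
    by_cases hA : C m₀ = C (m₀ + d)
    · have hNbound : m₀ + 3*d ≤ N := by
        have h9 : (2*k+5)*(m₀+3*d) < (2*k+5)*N := by omega
        have := Nat.lt_of_mul_lt_mul_left h9
        omega
      obtain ⟨t, ht, hCt⟩ := Cw m₀ d hd1 hNbound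
      apply hCt
      rcases Nat.eq_zero_or_pos t with ht0 | ht0
      · rw [ht0]; simpa using hA
      apply blockeq_d hY C p q E d hd (m₀+t)
      · have : (2*k+5)*(m₀+1) ≤ (2*k+5)*(m₀+t) := Nat.mul_le_mul_left _ (by omega)
        omega
      · have e1 : (2*k+5)*(m₀+t+1) ≤ (2*k+5)*(m₀+2*d) := Nat.mul_le_mul_left _ (by omega)
        omega
    by_cases hB : C (m₀+2*d) = C (m₀+3*d)
    · have hNbound : m₀ + 1 + 3*d ≤ N := by
        have h10 : (2*k+5)*(m₀+1+3*d) < (2*k+5)*(N+1) := by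
          have h11 : (2*k+5)*(N+1) = (2*k+5)*N + (2*k+5) := by ring
          omega
        have := Nat.lt_of_mul_lt_mul_left h10
        omega
      obtain ⟨t, ht, hCt⟩ := Cw (m₀+1) d hd1 hNbound
      apply hCt
      rcases (by omega : t = 2*d - 1 ∨ t < 2*d - 1) with ht0 | ht0
      · rw [ht0, show m₀+1+(2*d-1) = m₀+2*d by omega,
          show m₀+2*d+d = m₀+3*d by omega]
        exact hB
      apply blockeq_d hY C p q E d hd (m₀+1+t)
      · have : (2*k+5)*(m₀+1) ≤ (2*k+5)*(m₀+1+t) := Nat.mul_le_mul_left _ (by omega)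
        omega
      · have e1 : (2*k+5)*(m₀+1+t+1) ≤ (2*k+5)*(m₀+2*d) := Nat.mul_le_mul_left _ (by omega)
        omega
    · -- mixed: prefix/suffix sharing forces the two generator images equal
      have hsuf : ∀ z, z < 2*k+5 - rp →
          ug Y (C m₀) (rp + z) = ug Y (C (m₀+d)) (rp + z) := by
        intro z hz
        have hE := E z (by omega)
        rw [show p + z = (2*k+5)*m₀ + (rp+z) by omega] at hE
        have h9 : (2*k+5)*m₀ + (rp+z) + q = (2*k+5)*(m₀+d) + (rp+z) := by rw [hd]; ring
        rw [h9] at hE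
        rw [← gval hY C m₀ (rp+z) (by omega), ← gval hY C (m₀+d) (rp+z) (by omega)]
        exact hE
      have hpre : ∀ z, z < rp →
          ug Y (C (m₀+2*d)) z = ug Y (C (m₀+3*d)) z := by
        intro z hz
        have hE := E ((2*k+5)*(m₀+2*d) + z - p) (by omega)
        rw [show p + ((2*k+5)*(m₀+2*d) + z - p) = (2*k+5)*(m₀+2*d) + z by omega] at hE
        have h9 : (2*k+5)*(m₀+2*d) + z + q = (2*k+5)*(m₀+3*d) + z := by rw [hd]; ring
        rw [h9] at hE
        rw [← gval hY C (m₀+2*d) z (by omega), ← gval hY C (m₀+3*d) z (by omega)]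
        exact hE
      obtain ⟨i0, hi0, hne0⟩ := hY.hne
      have hall : ug Y false (2*i0) = ug Y true (2*i0) := by
        rcases Nat.lt_or_ge (2*i0) rp with hlt | hge
        · exact ug_ne_flip _ _ hB _ (hpre (2*i0) hlt)
        · have := hsuf (2*i0 - rp) (by omega)
          rw [show rp + (2*i0 - rp) = 2*i0 by omega] at this
          exact ug_ne_flip _ _ hA _ this
      rw [ug_even _ _ _ (by omega), ug_even _ _ _ (by omega),
        show (2*i0)/2 = i0 by omega] at hall
      exact hne0 hall


section SmallQ

variable {N p q : ℕ}

/-- the basic period equation at an absolute position -/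
lemma Eat (E : ∀ i, i < 2*q → gfun k Y C (p+i) = gfun k Y C (p+i+q))
    (j : ℕ) (h1 : p ≤ j) (h2 : j < p + 2*q) :
    gfun k Y C j = gfun k Y C (j+q) := by
  have hE := E (j - p) (by omega)
  rwa [show p + (j-p) = j by omega] at hE

/-- pairs propagate along the period -/
lemma pair_shift (E : ∀ i, i < 2*q → gfun k Y C (p+i) = gfun k Y C (p+i+q))
    (j : ℕ) (h1 : p ≤ j) (h2 : j + 1 < p + 2*q) :
    (gfun k Y C j = gfun k Y C (j+1)) ↔
      (gfun k Y C (j+q) = gfun k Y C (j+q+1)) := by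
  have e1 := Eat E j (by omega) (by omega)
  have e2 := Eat E (j+1) (by omega) (by omega)
  rw [show j+1+q = j+q+1 by omega] at e2
  rw [e1, e2]

/-- two adjacent pairs are impossible -/
lemma adj_pairs (hY : YC k Y) (C : ℕ → Bool) (j : ℕ)
    (h1 : gfun k Y C j = gfun k Y C (j+1))
    (h2 : gfun k Y C (j+1) = gfun k Y C (j+1+1)) : False := by
  have hk5 := hY.hk
  obtain ⟨o1, n1⟩ := lem_pair hY C j h1
  obtain ⟨o2, n2⟩ := lem_pair hY C (j+1) h2
  have hm := modadd k j 1 (by omega)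
  have hrlt : j % (2*k+5) < 2*k+5 := Nat.mod_lt _ (by omega)
  rw [Nat.mod_eq_of_lt (show j % (2*k+5) + 1 < 2*k+5 by omega)] at hm
  omega

/-- a cube whose interior positions all live in one block pulls back (even period) -/
lemma inblock_even (hY : YC k Y) (C : ℕ → Bool) (p q : ℕ)
    (E : ∀ i, i < 2*q → gfun k Y C (p+i) = gfun k Y C (p+i+q))
    (Q : ℕ) (hQe : q = 2*Q) (hQ1 : 1 ≤ Q) (m₀ rp : ℕ)
    (hdm : p = (2*k+5)*m₀ + rp) (hin : rp + 3*q ≤ 2*k+5) : False := by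
  have hk5 := hY.hk
  set P := (rp+1)/2 with hP
  obtain ⟨t, ht, hcube⟩ := hY.ycf (C m₀) P Q hQ1 (by omega)
  apply hcube
  set z := 2*(P+t) with hz
  have hz1 : rp ≤ z := by omega
  have hz2 : z - rp < 2*q := by omega
  have hE := Eat E ((2*k+5)*m₀ + z) (by omega) (by omega)
  rw [show (2*k+5)*m₀ + z = p + (z - rp) by omega,
      show p + (z - rp) + q = p + (z - rp + q) by omega] at hE
  rw [show p + (z - rp) = (2*k+5)*m₀ + z by omega,
      show p + (z - rp + q) = (2*k+5)*m₀ + (z + q) by omega] at hE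
  rw [gval hY C m₀ z (by omega), gval hY C m₀ (z+q) (by omega)] at hE
  have := ug_period Y (C m₀) Q z (by rw [show z + 2*Q = z + q by omega]; exact hE)
  rwa [show z/2 = P + t by omega] at this

lemma case_q1 (hY : YC k Y) (C : ℕ → Bool) (p q : ℕ) (hq1 : q = 1)
    (E : ∀ i, i < 2*q → gfun k Y C (p+i) = gfun k Y C (p+i+q)) : False := by
  subst hq1
  have h1 := E 0 (by omega)
  have h2 := E 1 (by omega)
  rw [show p + 0 = p by omega, show p + 0 + 1 = p + 1 by omega] at h1
  rw [show p + 1 + 1 = p + 1 + 1 by omega] at h2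
  exact adj_pairs hY C p h1 h2

lemma case_q2 (hY : YC k Y) (C : ℕ → Bool) (p q : ℕ) (hq2 : q = 2)
    (E : ∀ i, i < 2*q → gfun k Y C (p+i) = gfun k Y C (p+i+q)) : False := by
  subst hq2
  have e0 := E 0 (by omega)
  have e1 := E 1 (by omega)
  have e2 := E 2 (by omega)
  have e3 := E 3 (by omega)
  rw [show p + 0 = p by omega, show p + 0 + 2 = p+2 by omega] at e0
  rw [show p + 1 + 2 = p+3 by omega] at e1
  rw [show p + 2 + 2 = p+4 by omega] at e2
  rw [show p + 3 + 2 = p+5 by omega] at e3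
  by_cases hpp : gfun k Y C p = gfun k Y C (p+1)
  · refine adj_pairs hY C p hpp ?_
    rw [show p+1+1 = p+2 by omega, ← e0]
    exact hpp.symm
  · obtain ⟨d, hd4, hpair⟩ := lem_pair_exists hY C p
    have a1 : gfun k Y C (p+1) ≠ gfun k Y C (p+2) := by
      rw [← e0]; intro h; exact hpp h.symm
    have a2 : gfun k Y C (p+2) ≠ gfun k Y C (p+3) := by
      rw [← e0, ← e1]; exact hpp
    have a3 : gfun k Y C (p+3) ≠ gfun k Y C (p+4) := by
      rw [← e1, ← e2]; exact a1
    have a4 : gfun k Y C (p+4) ≠ gfun k Y C (p+5) := by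
      rw [← e2, ← e3]; exact a2
    interval_cases d
    · rw [show p+0 = p by omega, show p+0+1 = p+1 by omega] at hpair; exact hpp hpair
    · rw [show p+1+1 = p+2 by omega] at hpair; exact a1 hpair
    · rw [show p+2+1 = p+3 by omega] at hpair; exact a2 hpair
    · rw [show p+3+1 = p+4 by omega] at hpair; exact a3 hpair
    · rw [show p+4+1 = p+5 by omega] at hpair; exact a4 hpair

lemma case_q3 (hY : YC k Y) (C : ℕ → Bool) (p q : ℕ) (hq3 : q = 3)
    (E : ∀ i, i < 2*q → gfun k Y C (p+i) = gfun k Y C (p+i+q)) : False := by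
  have hk5 := hY.hk
  subst hq3
  obtain ⟨d, hd4, hpair⟩ := lem_pair_exists hY C p
  have hpair' := (pair_shift E (p+d) (by omega) (by omega)).mp hpair
  obtain ⟨o1, n1⟩ := lem_pair hY C (p+d) hpair
  obtain ⟨o2, n2⟩ := lem_pair hY C (p+d+3) hpair'
  have hm := modadd k (p+d) 3 (by omega)
  set r := (p+d) % (2*k+5) with hr
  have hrlt : r < 2*k+5 := Nat.mod_lt _ (by omega)
  rcases Nat.lt_or_ge (r+3) (2*k+5) with hc | hc
  · rw [Nat.mod_eq_of_lt hc] at hm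
    rw [hm] at o2
    omega
  · have h9 : (r+3) % (2*k+5) = r + 3 - (2*k+5) := by
      rw [Nat.mod_eq_sub_mod (by omega), Nat.mod_eq_of_lt (by omega)]
    rw [h9] at hm
    rw [hm] at o2 n2
    omega

lemma case_q4 (hY : YC k Y) (C : ℕ → Bool) (p q : ℕ) (hq4 : q = 4)
    (E : ∀ i, i < 2*q → gfun k Y C (p+i) = gfun k Y C (p+i+q)) : False := by
  have hk5 := hY.hk
  subst hq4
  obtain ⟨m₀, rp, hrp, hdm⟩ : ∃ m r, r < 2*k+5 ∧ p = (2*k+5)*m + r := jdecomp k p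
  rcases Nat.lt_or_ge (rp + 12) (2*k+6) with hA | hA
  · -- no boundary : in-block pullback
    exact inblock_even hY C p 4 E 2 rfl (by omega) m₀ rp hdm (by omega)
  -- boundary at distance D = 2k+5-rp ∈ [1,11]
  set D := 2*k+5 - rp with hD
  have hD1 : 1 ≤ D ∧ D ≤ 11 := by omega
  have hbd : (2*k+5)*(m₀+1) = p + D := by
    have : (2*k+5)*(m₀+1) = (2*k+5)*m₀ + (2*k+5) := by ring
    omega
  rcases (by omega : D = 1 ∨ (2 ≤ D ∧ D ≤ 8) ∨ D = 9 ∨ D = 10 ∨ D = 11) with h | h | h | h | h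
  · -- D = 1 : Y b' 0 = Y b' 2
    have hE := Eat E (p+1) (by omega) (by omega)
    rw [show p+1 = (2*k+5)*(m₀+1) + 0 by omega,
        show (2*k+5)*(m₀+1) + 0 + 4 = (2*k+5)*(m₀+1) + 4 by omega] at hE
    rw [gval hY C (m₀+1) 0 (by omega), gval hY C (m₀+1) 4 (by omega)] at hE
    have := ug_period Y (C (m₀+1)) 2 0 (by rw [show (0:ℕ)+2*2 = 4 by omega]; exact hE)
    rw [show (0:ℕ)/2 = 0 by omega, show (0:ℕ)+2 = 2 by omega, hY.y0, hY.y2] at this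
    simp at this
  · -- 2 ≤ D ≤ 8 : pair at boundary-2 shifts onto even position
    have hpe := pair_end hY C m₀
    have hj : (2*k+5)*m₀ + (2*k+3) = p + (D - 2) := by omega
    have hpair' := (pair_shift E ((2*k+5)*m₀ + (2*k+3)) (by omega) (by omega)).mp hpe
    obtain ⟨o2, n2⟩ := lem_pair hY C _ hpair'
    rw [show (2*k+5)*m₀ + (2*k+3) + 4 = (2*k+5)*(m₀+1) + 2 by ring,
      modval k (m₀+1) 2 (by omega)] at o2
    omega
  · -- D = 9
    have hE := Eat E (p+6) (by omega) (by omega)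
    rw [show p+6 = (2*k+5)*m₀ + (2*k+2) by omega,
        show (2*k+5)*m₀ + (2*k+2) + 4 = (2*k+5)*(m₀+1) + 1 by ring] at hE
    rw [gval hY C m₀ (2*k+2) (by omega), gval hY C (m₀+1) 1 (by omega),
      ug_even _ _ _ (by omega), ug_odd _ _ _ (by omega),
      show (2*k+2)/2 = k+1 by omega, show (1:ℕ)/2 = 0 by omega,
      hY.yk1, hY.y0] at hE
    simp at hE
  · -- D = 10
    have hE := Eat E (p+7) (by omega) (by omega)
    rw [show p+7 = (2*k+5)*m₀ + (2*k+2) by omega,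
        show (2*k+5)*m₀ + (2*k+2) + 4 = (2*k+5)*(m₀+1) + 1 by ring] at hE
    rw [gval hY C m₀ (2*k+2) (by omega), gval hY C (m₀+1) 1 (by omega),
      ug_even _ _ _ (by omega), ug_odd _ _ _ (by omega),
      show (2*k+2)/2 = k+1 by omega, show (1:ℕ)/2 = 0 by omega,
      hY.yk1, hY.y0] at hE
    simp at hE
  · -- D = 11 : period 2 window for Y (C m₀) on [k-3, k]
    obtain ⟨t, ht, hcube⟩ := hY.ycf (C m₀) (k-3) 2 (by omega) (by omega)
    apply hcube
    have hrel : ∀ z, rp ≤ z → z - rp ≤ 6 →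
        Y (C m₀) (z/2) = Y (C m₀) (z/2 + 2) := by
      intro z h1 h2
      have hE := Eat E ((2*k+5)*m₀ + z) (by omega) (by omega)
      rw [show (2*k+5)*m₀ + z + 4 = (2*k+5)*m₀ + (z+4) by omega] at hE
      rw [gval hY C m₀ z (by omega), gval hY C m₀ (z+4) (by omega)] at hE
      exact ug_period Y (C m₀) 2 z (by rw [show z+2*2 = z+4 by omega]; exact hE)
    have := hrel (2*(k-3+t)) (by omega) (by omega)
    rwa [show (2*(k-3+t))/2 = k-3+t by omega] at this

end SmallQ


section Beta

/-- location of block boundaries strictly inside a cube of period 5 ≤ q < 2k+5 -/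
lemma bdry (hY : YC k Y) (C : ℕ → Bool) (p q : ℕ)
    (E : ∀ i, i < 2*q → gfun k Y C (p+i) = gfun k Y C (p+i+q))
    (hq5 : 5 ≤ q) (hqL : q < 2*k+5) (m : ℕ)
    (h1 : p < (2*k+5)*(m+1)) (h2 : (2*k+5)*(m+1) < p + 3*q) :
    (2*k+5)*(m+1) ≤ p+1 ∨ p + 3*q - 4 ≤ (2*k+5)*(m+1) ∨
      (q = 5 ∧ (2*k+5)*(m+1) = p+6) := by
  have hk5 := hY.hk
  have hX : (2*k+5)*(m+1) = (2*k+5)*m + (2*k+5) := by ring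
  set B := (2*k+5)*(m+1) with hB
  by_contra hcon
  push_neg at hcon
  obtain ⟨hc1, hc2, hc3⟩ := hcon
  -- canonical pairs at B-2 and B+3
  have hp1 := pair_end hY C m
  have hp2 := pair_three hY C (m+1)
  have hj1 : (2*k+5)*m + (2*k+3) = B - 2 := by omega
  have R1 : ¬ (p + 2 ≤ B ∧ B ≤ p + 2*q - 5) := by
    rintro ⟨hr1, hr2⟩
    have q1 := (pair_shift E ((2*k+5)*m + (2*k+3)) (by omega) (by omega)).mp hp1
    have q2 := (pair_shift E ((2*k+5)*(m+1) + 3) (by omega) (by omega)).mp hp2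
    have h5 : (2*k+5)*m + (2*k+3) + q + 5 = (2*k+5)*(m+1) + 3 + q := by omega
    rw [← h5] at q2
    have := lem_dist5 hY C ((2*k+5)*m + (2*k+3) + q) q1 q2
    rw [show (2*k+5)*m + (2*k+3) + q = (2*k+5)*(m+1) + (q-2) by omega,
      modval k (m+1) (q-2) (by omega)] at this
    omega
  have R2 : ¬ (p + q + 2 ≤ B ∧ B + 5 ≤ p + 3*q) := by
    rintro ⟨hr1, hr2⟩
    rcases Nat.lt_or_ge q (2*k+4) with hq' | hq'
    · -- q ≤ 2k+3
      have e1 : (2*k+5)*m + (2*k+3-q) + q = (2*k+5)*m + (2*k+3) := by omega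
      have q1 := (pair_shift E ((2*k+5)*m + (2*k+3-q)) (by omega) (by omega)).mpr
        (by rw [e1]; exact hp1)
      have e2 : (2*k+5)*m + (2*k+3-q) + 5 + q = (2*k+5)*(m+1) + 3 := by omega
      have q2 := (pair_shift E ((2*k+5)*m + (2*k+3-q) + 5) (by omega) (by omega)).mpr
        (by rw [e2]; exact hp2)
      have := lem_dist5 hY C ((2*k+5)*m + (2*k+3-q)) q1 q2
      rw [modval k m (2*k+3-q) (by omega)] at this
      omega
    · -- q = 2k+4 : the backshifted boundary pair sits at in-block position 2k+4
      have hq'' : q = 2*k+4 := by omega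
      have hm1 : 1 ≤ m := by
        by_contra hm0
        have : m = 0 := by omega
        rw [this] at hB
        have : (2*k+5)*(0+1) = 2*k+5 := by ring
        omega
      have hXm : (2*k+5)*m = (2*k+5)*(m-1) + (2*k+5) := by
        have : m - 1 + 1 = m := by omega
        calc (2*k+5)*m = (2*k+5)*((m-1)+1) := by rw [this]
          _ = (2*k+5)*(m-1) + (2*k+5) := by ring
      have e1 : (2*k+5)*(m-1) + (2*k+4) + q = (2*k+5)*m + (2*k+3) := by omega
      have q1 := (pair_shift E ((2*k+5)*(m-1) + (2*k+4)) (by omega) (by omega)).mpr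
        (by rw [e1]; exact hp1)
      have e2 : (2*k+5)*(m-1) + (2*k+4) + 5 + q = (2*k+5)*(m+1) + 3 := by omega
      have q2 := (pair_shift E ((2*k+5)*(m-1) + (2*k+4) + 5) (by omega) (by omega)).mpr
        (by rw [e2]; exact hp2)
      have := lem_dist5 hY C ((2*k+5)*(m-1) + (2*k+4)) q1 q2
      rw [modval k (m-1) (2*k+4) (by omega)] at this
      omega
  omega

/-- no boundary, odd period -/
lemma beta2_odd (hY : YC k Y) (C : ℕ → Bool) (p q : ℕ)
    (E : ∀ i, i < 2*q → gfun k Y C (p+i) = gfun k Y C (p+i+q))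
    (hq3 : 3 ≤ q) (hqo : q % 2 = 1) (m₀ rp : ℕ)
    (hdm : p = (2*k+5)*m₀ + rp) (hin : rp + 3*q ≤ 2*k+5) : False := by
  have hk5 := hY.hk
  obtain ⟨d, hd4, hpair⟩ := lem_pair_exists hY C p
  have hpair' := (pair_shift E (p+d) (by omega) (by omega)).mp hpair
  obtain ⟨o1, n1⟩ := lem_pair hY C (p+d) hpair
  obtain ⟨o2, n2⟩ := lem_pair hY C (p+d+q) hpair'
  rw [show p + d = (2*k+5)*m₀ + (rp+d) by omega,
    modval k m₀ (rp+d) (by omega)] at o1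
  rw [show p + d + q = (2*k+5)*m₀ + (rp+d+q) by omega,
    modval k m₀ (rp+d+q) (by omega)] at o2
  omega

/-- single boundary right after the start, short cube -/
lemma beta3a (hY : YC k Y) (C : ℕ → Bool) (p q : ℕ)
    (E : ∀ i, i < 2*q → gfun k Y C (p+i) = gfun k Y C (p+i+q))
    (hq5 : 5 ≤ q) (h3q : 3*q ≤ 2*k+6) (m₀ : ℕ)
    (hbd : p + 1 = (2*k+5)*(m₀+1)) : False := by
  have hk5 := hY.hk
  -- q is even
  have hp3 := pair_three hY C (m₀+1)
  have hj : (2*k+5)*(m₀+1) + 3 = p + 4 := by omega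
  have hpair' := (pair_shift E ((2*k+5)*(m₀+1) + 3) (by omega) (by omega)).mp hp3
  obtain ⟨o2, n2⟩ := lem_pair hY C _ hpair'
  rw [show (2*k+5)*(m₀+1) + 3 + q = (2*k+5)*(m₀+1) + (3+q) by omega,
    modval k (m₀+1) (3+q) (by omega)] at o2
  have hqe : q % 2 = 0 := by omega
  obtain ⟨Q, hQ⟩ : ∃ Q, q = 2*Q := ⟨q/2, by omega⟩
  obtain ⟨t, ht, hcube⟩ := hY.ycf (C (m₀+1)) 0 Q (by omega) (by omega)
  apply hcube
  have hE := Eat E ((2*k+5)*(m₀+1) + 2*t) (by omega) (by omega)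
  rw [show (2*k+5)*(m₀+1) + 2*t + q = (2*k+5)*(m₀+1) + (2*t+q) by omega] at hE
  rw [gval hY C (m₀+1) (2*t) (by omega), gval hY C (m₀+1) (2*t+q) (by omega)] at hE
  have := ug_period Y (C (m₀+1)) Q (2*t)
    (by rw [show 2*t + 2*Q = 2*t+q by omega]; exact hE)
  rw [show (2*t)/2 = t by omega] at this
  rw [show (0:ℕ)+t = t by omega, show t + Q = t + Q by omega]
  exact this

/-- boundaries at p+1 and at the end -/
lemma beta3b (hY : YC k Y) (C : ℕ → Bool) (p q : ℕ)
    (E : ∀ i, i < 2*q → gfun k Y C (p+i) = gfun k Y C (p+i+q))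
    (hq5 : 5 ≤ q) (h3q1 : 2*k+7 ≤ 3*q) (h3q2 : 3*q ≤ 2*k+10) (m₀ : ℕ)
    (hbd : p + 1 = (2*k+5)*(m₀+1)) : False := by
  have hk5 := hY.hk
  -- q is even
  have hp3 := pair_three hY C (m₀+1)
  have hpair' := (pair_shift E ((2*k+5)*(m₀+1) + 3) (by omega) (by omega)).mp hp3
  obtain ⟨o2, n2⟩ := lem_pair hY C _ hpair'
  rw [show (2*k+5)*(m₀+1) + 3 + q = (2*k+5)*(m₀+1) + (3+q) by omega,
    modval k (m₀+1) (3+q) (by omega)] at o2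
  have hqe : q % 2 = 0 := by omega
  obtain ⟨Q, hQ⟩ : ∃ Q, q = 2*Q := ⟨q/2, by omega⟩
  set b := C (m₀+1) with hb
  -- F1 : the letter before the boundary is 1, so Y b (Q-1) = 0
  have hX0 : (2*k+5)*(m₀+1) = (2*k+5)*m₀ + (2*k+5) := by ring
  have hE0 := Eat E p (le_refl p) (by omega)
  rw [show p = (2*k+5)*m₀ + (2*k+4) by omega,
    show (2*k+5)*m₀ + (2*k+4) + q = (2*k+5)*(m₀+1) + (q-1) by omega,
    gval hY C m₀ (2*k+4) (by omega), gval hY C (m₀+1) (q-1) (by omega),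
    ug_even _ _ _ (by omega), ug_odd _ _ _ (by omega),
    show (2*k+4)/2 = k+2 by omega, show (q-1)/2 = Q-1 by omega, hY.yk2] at hE0
  have hF1 : Y b (Q-1) = false := by
    rw [← hb] at hE0
    cases hYb : Y b (Q-1)
    · rfl
    · rw [hYb] at hE0; simp at hE0
  -- window : Y b (Q-1) = Y b (2Q-1)
  have hE1 := Eat E (p + (q-1)) (by omega) (by omega)
  rw [show p + (q-1) = (2*k+5)*(m₀+1) + (q-2) by omega,
    show (2*k+5)*(m₀+1) + (q-2) + q = (2*k+5)*(m₀+1) + (q-2+q) by omega,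
    gval hY C (m₀+1) (q-2) (by omega), gval hY C (m₀+1) (q-2+q) (by omega)] at hE1
  have hW := ug_period Y b Q (q-2)
    (by rw [show q-2 + 2*Q = q-2+q by omega, hb]; exact hE1)
  rw [show (q-2)/2 = Q-1 by omega] at hW
  -- crossing : Y b (2Q-1) = true
  have hX1 : (2*k+5)*(m₀+2) = (2*k+5)*m₀ + 2*(2*k+5) := by ring
  have h3qe : 3*q = 2*k+8 ∨ 3*q = 2*k+10 := by omega
  have hcross : Y b (2*Q-1) = true := by
    rcases h3qe with h3 | h3
    · -- c = 2
      have hE2 := Eat E (p + (2*k+7-q)) (by omega) (by omega)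
      rw [show p + (2*k+7-q) = (2*k+5)*(m₀+1) + (2*k+6-q) by omega,
        show (2*k+5)*(m₀+1) + (2*k+6-q) + q = (2*k+5)*(m₀+2) + 1 by omega,
        gval hY C (m₀+1) (2*k+6-q) (by omega), gval hY C (m₀+2) 1 (by omega),
        ug_even _ _ _ (by omega), ug_odd _ _ _ (by omega),
        show (2*k+6-q)/2 = 2*Q-1 by omega, show (1:ℕ)/2 = 0 by omega, hY.y0] at hE2
      rw [← hb] at hE2
      exact hE2
    · -- c = 4
      have hE2 := Eat E (p + (2*k+9-q)) (by omega) (by omega)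
      rw [show p + (2*k+9-q) = (2*k+5)*(m₀+1) + (2*k+8-q) by omega,
        show (2*k+5)*(m₀+1) + (2*k+8-q) + q = (2*k+5)*(m₀+2) + 3 by omega,
        gval hY C (m₀+1) (2*k+8-q) (by omega), gval hY C (m₀+2) 3 (by omega),
        ug_even _ _ _ (by omega), ug_odd _ _ _ (by omega),
        show (2*k+8-q)/2 = 2*Q-1 by omega, show (3:ℕ)/2 = 1 by omega, hY.y1] at hE2
      rw [← hb] at hE2
      exact hE2
  rw [show Q-1+Q = 2*Q-1 by omega] at hW
  rw [hF1, hcross] at hW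
  exact Bool.false_ne_true hW

/-- single boundary near the end -/
lemma beta4 (hY : YC k Y) (C : ℕ → Bool) (p q : ℕ)
    (E : ∀ i, i < 2*q → gfun k Y C (p+i) = gfun k Y C (p+i+q))
    (hq5 : 5 ≤ q) (hqL : q < 2*k+5) (m₀ c : ℕ) (hc1 : 1 ≤ c) (hc4 : c ≤ 4)
    (hbd : (2*k+5)*(m₀+1) = p + 3*q - c) (hcb : c < 3*q)
    (h3q : 3*q ≤ 2*k+5+c) : False := by
  have hk5 := hY.hk
  have hX0 : (2*k+5)*(m₀+1) = (2*k+5)*m₀ + (2*k+5) := by ring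
  set sp := 2*k+5+c-3*q with hsp
  have hp : p = (2*k+5)*m₀ + sp := by omega
  set e := C m₀ with he
  -- q is even
  have hp1 := pair_end hY C m₀
  have e1 : (2*k+5)*m₀ + (2*k+3-q) + q = (2*k+5)*m₀ + (2*k+3) := by omega
  have q1 := (pair_shift E ((2*k+5)*m₀ + (2*k+3-q)) (by omega) (by omega)).mpr
    (by rw [e1]; exact hp1)
  obtain ⟨o1, n1⟩ := lem_pair hY C _ q1
  rw [modval k m₀ (2*k+3-q) (by omega)] at o1
  have hqe : q % 2 = 0 := by omega
  obtain ⟨Q, hQ⟩ : ∃ Q, q = 2*Q := ⟨q/2, by omega⟩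
  -- in-block relations
  have hrel : ∀ z, sp ≤ z → z + q + c ≤ sp + 3*q - 1 →
      Y e (z/2) = Y e (z/2 + Q) := by
    intro z h1 h2
    have hE := Eat E ((2*k+5)*m₀ + z) (by omega) (by omega)
    rw [show (2*k+5)*m₀ + z + q = (2*k+5)*m₀ + (z+q) by omega,
      gval hY C m₀ z (by omega), gval hY C m₀ (z+q) (by omega)] at hE
    rw [← he] at hE
    exact ug_period Y e Q z (by rw [show z + 2*Q = z+q by omega]; exact hE)
  -- crossing relation for c ≥ 3
  have hcross : 3 ≤ c → Y e (k+3-Q) = true := by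
    intro hc3
    have hE := Eat E (p + (2*q-c+1)) (by omega) (by omega)
    rw [show p + (2*q-c+1) = (2*k+5)*m₀ + (2*k+6-q) by omega,
      show (2*k+5)*m₀ + (2*k+6-q) + q = (2*k+5)*(m₀+1) + 1 by omega,
      gval hY C m₀ (2*k+6-q) (by omega), gval hY C (m₀+1) 1 (by omega),
      ug_even _ _ _ (by omega), ug_odd _ _ _ (by omega),
      show (2*k+6-q)/2 = k+3-Q by omega, show (1:ℕ)/2 = 0 by omega, hY.y0] at hE
    rw [← he] at hE
    exact hE
  rcases (by omega : c ≤ 2 ∨ 3 ≤ c) with hcs | hcs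
  · -- full pullback window
    obtain ⟨t, ht, hcube⟩ := hY.ycf e (k+3-3*Q) Q (by omega) (by omega)
    apply hcube
    rcases (by omega : (c = 2 ∧ t = 2*Q-1) ∨ 2*t + c ≤ 2*q - 1) with ⟨hcc, htt⟩ | hok
    · have := hrel (sp + (2*q-3)) (by omega) (by omega)
      rwa [show (sp + (2*q-3))/2 = k+3-3*Q+t by omega,
        show k+3-3*Q+t+Q = k+3-3*Q+t+Q by omega] at this
    · have := hrel (sp + 2*t) (by omega) (by omega)
      rwa [show (sp + 2*t)/2 = k+3-3*Q+t by omega] at this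
  · -- short window plus crossing
    obtain ⟨t, ht, hcube⟩ := hY.ycf e (k+4-3*Q) Q (by omega) (by omega)
    apply hcube
    rcases (by omega : t = 2*Q-1 ∨ (c = 4 ∧ t = 0) ∨
        (2*t + c ≤ 2*q - 1 ∧ t ≤ 2*Q-2) ∨ (c = 4 ∧ 1 ≤ t ∧ t ≤ 2*Q-2)) with
      htt | ⟨hcc, htt⟩ | ⟨hok, htt⟩ | ⟨hcc, ht1, htt⟩
    · rw [htt, show k+4-3*Q + (2*Q-1) = k+3-Q by omega,
        show k+3-Q+Q = k+3 by omega, hcross hcs, hY.yk3]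
    · have := hrel sp (by omega) (by omega)
      rw [htt, show k+4-3*Q+0 = sp/2 by omega]
      exact this
    · have := hrel (sp + 2*t) (by omega) (by omega)
      rwa [show (sp + 2*t)/2 = k+4-3*Q+t by omega] at this
    · have := hrel (sp + 2*t - 1) (by omega) (by omega)
      rwa [show (sp + 2*t - 1)/2 = k+4-3*Q+t by omega] at this

/-- the special q = 5 boundary at p+6 -/
lemma beta5 (hY : YC k Y) (C : ℕ → Bool) (p q : ℕ)
    (E : ∀ i, i < 2*q → gfun k Y C (p+i) = gfun k Y C (p+i+q))
    (hq5 : q = 5) (m₀ : ℕ) (hbd : (2*k+5)*(m₀+1) = p + 6) : False := by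
  have hk5 := hY.hk
  have hX0 : (2*k+5)*(m₀+1) = (2*k+5)*m₀ + (2*k+5) := by ring
  subst hq5
  set e := C m₀ with he
  have hE0 := Eat E p (le_refl p) (by omega)
  rw [show p = (2*k+5)*m₀ + (2*k-1) by omega,
    show (2*k+5)*m₀ + (2*k-1) + 5 = (2*k+5)*m₀ + (2*k+4) by omega,
    gval hY C m₀ (2*k-1) (by omega), gval hY C m₀ (2*k+4) (by omega),
    ug_odd _ _ _ (by omega), ug_even _ _ _ (by omega),
    show (2*k-1)/2 = k-1 by omega, show (2*k+4)/2 = k+2 by omega, hY.yk2] at hE0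
  rw [← he] at hE0
  have hv1 : Y e (k-1) = false := by
    cases hYb : Y e (k-1)
    · rfl
    · rw [hYb] at hE0; simp at hE0
  have hE1 := Eat E (p+1) (by omega) (by omega)
  rw [show p + 1 = (2*k+5)*m₀ + (2*k) by omega,
    show (2*k+5)*m₀ + (2*k) + 5 = (2*k+5)*(m₀+1) + 0 by omega,
    gval hY C m₀ (2*k) (by omega), gval hY C (m₀+1) 0 (by omega),
    ug_even _ _ _ (by omega), ug_even _ _ _ (by omega),
    show (2*k)/2 = k by omega, show (0:ℕ)/2 = 0 by omega, hY.y0] at hE1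
  rw [← he] at hE1
  obtain ⟨t, ht, hcube⟩ := hY.ycf e (k-1) 1 (by omega) (by omega)
  apply hcube
  rcases (by omega : t = 0 ∨ t = 1) with rfl | rfl
  · rw [show k-1+0+1 = k by omega, show k-1+0 = k-1 by omega, hv1, hE1]
  · rw [show k-1+1+1 = k+1 by omega, show k-1+1 = k by omega, hE1, hY.yk1]

end Beta

theorem core (k : ℕ) (Y : Bool → ℕ → Bool) (hY : YC k Y) (C : ℕ → Bool)
    (N p q : ℕ) (hq : 1 ≤ q) (hle : p + 3*q ≤ N*(2*k+5))
    (Cw : ∀ P Q, 1 ≤ Q → P + 3*Q ≤ N → ∃ t, t < 2*Q ∧ C (P+t) ≠ C (P+t+Q))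
    (E : ∀ i, i < 2*q → gfun k Y C (p+i) = gfun k Y C (p+i+q)) : False := by
  have hk5 := hY.hk
  rcases Nat.lt_or_ge q (2*k+5) with hqL | hqL
  · rcases (by omega : q = 1 ∨ q = 2 ∨ q = 3 ∨ q = 4 ∨ 5 ≤ q) with h|h|h|h|hq5
    · exact case_q1 hY C p q h E
    · exact case_q2 hY C p q h E
    · exact case_q3 hY C p q h E
    · exact case_q4 hY C p q h E
    obtain ⟨m₀, rp, hrp, hdm⟩ : ∃ m r, r < 2*k+5 ∧ p = (2*k+5)*m + r := jdecomp k p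
    by_cases hin : rp + 3*q ≤ 2*k+5
    · rcases Nat.mod_two_eq_zero_or_one q with hqe | hqo
      · exact inblock_even hY C p q E (q/2) (by omega) (by omega) m₀ rp hdm hin
      · exact beta2_odd hY C p q E (by omega) hqo m₀ rp hdm hin
    · have hX0 : (2*k+5)*(m₀+1) = (2*k+5)*m₀ + (2*k+5) := by ring
      rcases bdry hY C p q E hq5 hqL m₀ (by omega) (by omega) with hb1 | hb2 | ⟨hbq, hb3⟩
      · -- boundary at p+1
        have hbd : p + 1 = (2*k+5)*(m₀+1) := by omega
        by_cases h3q : 3*q ≤ 2*k+6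
        · exact beta3a hY C p q E hq5 h3q m₀ hbd
        · -- second boundary at p+1+(2k+5)
          have hX1 : (2*k+5)*(m₀+1+1) = (2*k+5)*m₀ + 2*(2*k+5) := by ring
          rcases bdry hY C p q E hq5 hqL (m₀+1) (by omega) (by omega) with d1 | d2 | ⟨dq, d3⟩
          · omega
          · exact beta3b hY C p q E hq5 (by omega) (by omega) m₀ hbd
          · omega
      · -- boundary at the end
        set c := p + 3*q - (2*k+5)*(m₀+1) with hcdef
        have hcb : 1 ≤ c ∧ c ≤ 4 := by omega
        exact beta4 hY C p q E hq5 hqL m₀ c hcb.1 hcb.2 (by omega) (by omega) (by omega)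
      · exact beta5 hY C p q E hbq m₀ hb3
  · exact case_big hY C N p q hq hle Cw E hqL

end CFAux

open CFAux in
theorem stmt5 (k : ℕ) (hk : 5 ≤ k) (w₀ w₁ : List Bool) (hne : w₀ ≠ w₁)
    (hcf₀ : Cubefree w₀) (hcf₁ : Cubefree w₁)
    (hl₀ : w₀.length = k + 4) (hl₁ : w₁.length = k + 4)
    (hp₀ : [false, false] <+: w₀) (hs₀ : [true, true] <:+ w₀)
    (hp₁ : [false, false] <+: w₁) (hs₁ : [true, true] <:+ w₁) :
    ∃ u₀ u₁ : List Bool,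
      tmMap w₀ = u₀ ++ [false, true, false] ∧
      tmMap w₁ = u₁ ++ [false, true, false] ∧
      u₀.length = 2 * k + 5 ∧ u₁.length = 2 * k + 5 ∧
      CubefreeMorphism (fun b => if b then u₁ else u₀) := by
  obtain ⟨y₀, hy₀⟩ := hs₀
  obtain ⟨y₁, hy₁⟩ := hs₁
  obtain ⟨z₀, hz₀⟩ := hp₀
  obtain ⟨z₁, hz₁⟩ := hp₁
  have hylen₀ : y₀.length = k+2 := by
    have := congrArg List.length hy₀; simp at this; omega
  have hylen₁ : y₁.length = k+2 := by
    have := congrArg List.length hy₁; simp at this; omega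
  have hdec₀ : tmMap w₀ = (tmMap y₀ ++ [true]) ++ [false, true, false] := by
    rw [← hy₀]
    show (y₀ ++ [true,true]).flatMap _ = _
    rw [List.flatMap_append]
    simp [tmMap]
  have hdec₁ : tmMap w₁ = (tmMap y₁ ++ [true]) ++ [false, true, false] := by
    rw [← hy₁]
    show (y₁ ++ [true,true]).flatMap _ = _
    rw [List.flatMap_append]
    simp [tmMap]
  have hulen₀ : (tmMap y₀ ++ [true]).length = 2*k+5 := by
    simp [tmMap_length, hylen₀]; omega
  have hulen₁ : (tmMap y₁ ++ [true]).length = 2*k+5 := by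
    simp [tmMap_length, hylen₁]; omega
  refine ⟨tmMap y₀ ++ [true], tmMap y₁ ++ [true], hdec₀, hdec₁,
    by rw [hulen₀], by rw [hulen₁], ?_⟩
  -- the morphism
  intro w hw
  set Y : Bool → ℕ → Bool := fun b i => (if b then w₁ else w₀).getD i false with hYdef
  set C : ℕ → Bool := fun m => w.getD m false with hCdef
  -- getD facts for w₀ w₁
  have hwb_len : ∀ b : Bool, ((if b then w₁ else w₀) : List Bool).length = k + 4 := by
    intro b; cases b
    · simpa using hl₀
    · simpa using hl₁
  have hwb_cf : ∀ b : Bool, Cubefree (if b then w₁ else w₀) := by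
    intro b; cases b
    · simpa using hcf₀
    · simpa using hcf₁
  have hwb_pre : ∀ b : Bool, ∃ z, [false, false] ++ z = (if b then w₁ else w₀) := by
    intro b; cases b
    · exact ⟨z₀, hz₀⟩
    · exact ⟨z₁, hz₁⟩
  have hwb_suf : ∀ b : Bool, ∃ y : List Bool, y.length = k+2 ∧
      y ++ [true, true] = (if b then w₁ else w₀) := by
    intro b; cases b
    · exact ⟨y₀, hylen₀, hy₀⟩
    · exact ⟨y₁, hylen₁, hy₁⟩
  have y0 : ∀ b, Y b 0 = false := by
    intro b
    obtain ⟨z, hz⟩ := hwb_pre b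
    simp [hYdef, ← hz]
  have y1 : ∀ b, Y b 1 = false := by
    intro b
    obtain ⟨z, hz⟩ := hwb_pre b
    simp [hYdef, ← hz]
  have yk2 : ∀ b, Y b (k+2) = true := by
    intro b
    obtain ⟨y, hyl, hyy⟩ := hwb_suf b
    simp only [hYdef, ← hyy]
    rw [List.getD_append_right _ _ _ _ (by omega)]
    simp [hyl]
  have yk3 : ∀ b, Y b (k+3) = true := by
    intro b
    obtain ⟨y, hyl, hyy⟩ := hwb_suf b
    simp only [hYdef, ← hyy]
    rw [List.getD_append_right _ _ _ _ (by omega)]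
    have : k + 3 - y.length = 1 := by omega
    simp [this]
  have ycf : ∀ (b : Bool) P Q, 1 ≤ Q → P + 3*Q ≤ k+4 →
      ∃ t, t < 2*Q ∧ Y b (P+t) ≠ Y b (P+t+Q) := by
    intro b P Q h1 h2
    exact cf_index _ (hwb_cf b) P Q h1 (by rw [hwb_len]; exact h2)
  have y2 : ∀ b, Y b 2 = true := by
    intro b
    by_contra h2
    have h2' : Y b 2 = false := by revert h2; cases (Y b 2) <;> simp
    obtain ⟨t, ht, hne'⟩ := ycf b 0 1 le_rfl (by omega)
    apply hne'
    have h0 := y0 b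
    have h1 := y1 b
    rcases (by omega : t = 0 ∨ t = 1) with rfl | rfl
    · show Y b (0+0) = Y b (0+0+1)
      rw [show (0+0 : ℕ) = 0 from rfl, show (0+0+1 : ℕ) = 1 from rfl, h0, h1]
    · show Y b (0+1) = Y b (0+1+1)
      rw [show (0+1 : ℕ) = 1 from rfl, show (0+1+1 : ℕ) = 2 from rfl, h1, h2']
  have yk1 : ∀ b, Y b (k+1) = false := by
    intro b
    by_contra h2
    have h2' : Y b (k+1) = true := by revert h2; cases (Y b (k+1)) <;> simp
    obtain ⟨t, ht, hne'⟩ := ycf b (k+1) 1 le_rfl (by omega)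
    apply hne'
    rcases (by omega : t = 0 ∨ t = 1) with rfl | rfl
    · show Y b (k+1+0) = Y b (k+1+0+1)
      rw [show k+1+0 = k+1 by omega, show k+1+0+1 = k+2 by omega, h2', yk2]
    · show Y b (k+1+1) = Y b (k+1+1+1)
      rw [show k+1+1 = k+2 by omega, show k+1+1+1 = k+3 by omega, yk2, yk3]
  have hne' : ∃ i, i ≤ k+2 ∧ Y false i ≠ Y true i := by
    by_contra hcon
    push_neg at hcon
    apply hne
    apply List.ext_getElem (by omega)
    intro i h1 h2
    have hik : i < k + 4 := by omega
    rcases Nat.lt_or_ge i (k+3) with h3 | h3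
    · have := hcon i (by omega)
      simp only [hYdef, if_true, if_false] at this
      rw [← List.getD_eq_getElem _ false h1, ← List.getD_eq_getElem _ false h2]
      exact this
    · have hi3 : i = k + 3 := by omega
      rw [← List.getD_eq_getElem _ false h1, ← List.getD_eq_getElem _ false h2]
      have e0 : w₀.getD (k+3) false = true := by
        rw [← hy₀, List.getD_append_right _ _ _ _ (by omega)]
        have h5 : k + 3 - y₀.length = 1 := by omega
        simp [h5]
      have e1 : w₁.getD (k+3) false = true := by
        rw [← hy₁, List.getD_append_right _ _ _ _ (by omega)]
        have h5 : k + 3 - y₁.length = 1 := by omega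
        simp [h5]
      rw [hi3, e0, e1]
  have hYC : YC k Y := ⟨hk, y0, y1, y2, yk1, yk2, yk3, ycf, hne'⟩
  -- now the morphism image
  apply index_cf
  intro P Q hQ hle
  by_contra hcon
  push_neg at hcon
  have hulen : ∀ b : Bool,
      ((if b then (tmMap y₁ ++ [true]) else (tmMap y₀ ++ [true])) : List Bool).length
        = 2*k+5 := by
    intro b; cases b <;> simp [hulen₀, hulen₁]
  have hWlen := flatMap_length (2*k+5)
    (fun b => if b then (tmMap y₁ ++ [true]) else (tmMap y₀ ++ [true])) hulen w
  rw [hWlen] at hle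
  -- getD of image blocks
  have hu_get : ∀ (b : Bool) (z : ℕ), z < 2*k+5 →
      ((if b then (tmMap y₁ ++ [true]) else (tmMap y₀ ++ [true])) : List Bool).getD z false
        = ug Y b z := by
    intro b z hz
    have hdec : tmMap (if b then w₁ else w₀) =
        ((if b then (tmMap y₁ ++ [true]) else (tmMap y₀ ++ [true])) : List Bool)
          ++ [false, true, false] := by
      cases b
      · exact hdec₀
      · exact hdec₁
    have h1 : ((if b then (tmMap y₁ ++ [true]) else (tmMap y₀ ++ [true])) : List Bool).getD z false
        = (tmMap (if b then w₁ else w₀)).getD z false := by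
      rw [hdec, List.getD_append _ _ _ _ (by rw [hulen]; exact hz)]
    rw [h1, tm_getD _ z (by rw [hwb_len]; omega)]
    unfold ug
    rcases Nat.mod_two_eq_zero_or_one z with h | h <;> simp [h, hYdef]
  have hG : ∀ j, j < w.length * (2*k+5) →
      (w.flatMap (fun b => if b then (tmMap y₁ ++ [true]) else (tmMap y₀ ++ [true]))).getD j false
        = gfun k Y C j := by
    intro j hj
    rw [flatMap_getD (2*k+5) (by omega) _ hulen w j hj]
    unfold gfun
    rw [hu_get _ _ (Nat.mod_lt _ (by omega))]
  have E : ∀ i, i < 2*Q → gfun k Y C (P+i) = gfun k Y C (P+i+Q) := by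
    intro i hi
    rw [← hG (P+i) (by omega), ← hG (P+i+Q) (by omega)]
    exact hcon i hi
  exact core k Y hYC C w.length P Q hQ hle (cf_index w hw) E
end

section
/- The 3-uniform binary morphism φ₃ defined by φ₃(0) = 001 and φ₃(1) = 011 is cubefree: φ₃(w) is cubefree for every cubefree binary word w. -/
section

variable {α : Type*}

def HasCubeAt (w : List α) (s p : ℕ) : Prop :=
  s + 3 * p ≤ w.length ∧ ∀ j < 2 * p, w[s + j]? = w[s + j + p]?

theorem take_drop_add_eq_of_getElem? {w : List α} {s p : ℕ}
    (h : ∀ j < p, w[s + j]? = w[s + j + p]?) :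
    (w.drop (s + p)).take p = (w.drop s).take p := by
  refine List.ext_getElem? fun j => ?_
  simp only [List.getElem?_take, List.getElem?_drop]
  split_ifs with hj
  · rw [h j hj]; congr 1; omega
  · rfl

theorem exists_cube_infix_iff (w : List α) (p : ℕ) :
    (∃ x : List α, x.length = p ∧ x ++ x ++ x <:+: w) ↔ ∃ s, HasCubeAt w s p := by
  constructor
  · rintro ⟨x, rfl, a, c, rfl⟩
    refine ⟨a.length, by simp; omega, fun j hj => ?_⟩
    have hw : ∀ i < 3 * x.length, (a ++ (x ++ x ++ x) ++ c)[a.length + i]? = (x ++ x ++ x)[i]? :=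
      fun i hi => by
        rw [List.append_assoc a, List.getElem?_append_right (by omega), Nat.add_sub_cancel_left,
          List.getElem?_append_left (by simp; omega)]
    rw [hw j (by omega), Nat.add_assoc, hw (j + x.length) (by omega),
      List.getElem?_append_left (l₁ := x ++ x) (by simp; omega), List.append_assoc,
      List.getElem?_append_right (Nat.le_add_left _ _), Nat.add_sub_cancel]
  · rintro ⟨s, hlen, hper⟩
    refine ⟨(w.drop s).take p, by simp; omega, ?_⟩
    have h₁ := take_drop_add_eq_of_getElem? (w := w) (s := s) (p := p)
      fun j hj => hper j (by omega)
    have h₂ := take_drop_add_eq_of_getElem? (w := w) (s := s + p) (p := p)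
      fun j hj => by simpa [Nat.add_assoc] using hper (p + j) (by omega)
    have hcube : (w.drop s).take (p + p + p) =
        (w.drop s).take p ++ (w.drop s).take p ++ (w.drop s).take p := by
      rw [List.take_add, List.take_add, List.drop_drop, List.drop_drop, ← Nat.add_assoc,
        h₂, h₁]
    rw [← hcube]
    exact (List.take_prefix _ _).isInfix.trans (List.drop_suffix _ _).isInfix

theorem List.getElem?_flatMap_of_length_eq {β : Type*} {f : α → List β} {n : ℕ}
    (hf : ∀ a, (f a).length = n) (w : List α) (i : ℕ) {r : ℕ} (hr : r < n) :
    (w.flatMap f)[n * i + r]? = w[i]?.bind fun a => (f a)[r]? := by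
  induction w generalizing i with
  | nil => simp
  | cons a w ih =>
    cases i with
    | zero => simp [List.getElem?_append_left (show r < (f a).length by rw [hf]; exact hr)]
    | succ i =>
      rw [List.flatMap_cons, List.getElem?_append_right (by rw [hf, Nat.mul_succ]; omega), hf,
        show n * (i + 1) + r - n = n * i + r by rw [Nat.mul_succ]; omega, ih]
      rfl

end

theorem cubefree_iff_forall_not_hasCubeAt (w : List Bool) :
    Cubefree w ↔ ∀ s p, 0 < p → ¬ HasCubeAt w s p := by
  constructor
  · intro hw s p hp hcube
    obtain ⟨x, rfl, hx⟩ := (exists_cube_infix_iff w p).2 ⟨s, hcube⟩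
    exact hw x (List.length_pos_iff.1 hp) hx
  · intro hw x hx hinf
    obtain ⟨s, hcube⟩ := (exists_cube_infix_iff w _).1 ⟨x, rfl, hinf⟩
    exact hw s _ (List.length_pos_iff.2 hx) hcube

def phi3 (b : Bool) : List Bool := [false, b, true]

section

variable (w : List Bool)

theorem length_flatMap_phi3 : (w.flatMap phi3).length = 3 * w.length := by
  simp [List.length_flatMap, phi3, Nat.mul_comm]

theorem getElem?_flatMap_phi3 (i : ℕ) {r : ℕ} (hr : r < 3) :
    (w.flatMap phi3)[3 * i + r]? = w[i]?.bind fun b => (phi3 b)[r]? :=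
  List.getElem?_flatMap_of_length_eq (f := phi3) (fun _ => rfl) w i hr

theorem getElem?_flatMap_phi3_of_mod_three_eq_zero {i : ℕ}
    (hi : i < (w.flatMap phi3).length) (h : i % 3 = 0) : (w.flatMap phi3)[i]? = some false := by
  rw [length_flatMap_phi3] at hi
  rw [← Nat.div_add_mod i 3, h, getElem?_flatMap_phi3 w _ (by decide),
    List.getElem?_eq_getElem (by omega)]
  rfl

theorem getElem?_flatMap_phi3_of_mod_three_eq_two {i : ℕ}
    (hi : i < (w.flatMap phi3).length) (h : i % 3 = 2) : (w.flatMap phi3)[i]? = some true := by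
  rw [length_flatMap_phi3] at hi
  rw [← Nat.div_add_mod i 3, h, getElem?_flatMap_phi3 w _ (by decide),
    List.getElem?_eq_getElem (by omega)]
  rfl

theorem getElem?_flatMap_phi3_three_mul_add_one (i : ℕ) :
    (w.flatMap phi3)[3 * i + 1]? = w[i]? := by
  rw [getElem?_flatMap_phi3 w i (by decide)]
  cases w[i]? <;> rfl

end

theorem HasCubeAt.of_flatMap_phi3 {w : List Bool} {s q : ℕ}
    (h : HasCubeAt (w.flatMap phi3) s (3 * q)) : HasCubeAt w ((s + 1) / 3) q := by
  obtain ⟨hlen, hper⟩ := h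
  rw [length_flatMap_phi3] at hlen
  refine ⟨by omega, fun j hj => ?_⟩
  have h := hper (3 * ((s + 1) / 3 + j) + 1 - s) (by omega)
  rwa [Nat.add_sub_cancel' (by omega), Nat.add_right_comm, ← Nat.mul_add,
    getElem?_flatMap_phi3_three_mul_add_one, getElem?_flatMap_phi3_three_mul_add_one] at h

theorem not_hasCubeAt_flatMap_phi3 {w : List Bool} {s p : ℕ} (hp : ¬ 3 ∣ p) :
    ¬ HasCubeAt (w.flatMap phi3) s p := by
  rintro ⟨hlen, hper⟩
  have hletter : ∀ i ∈ [s, s + p, s + 2 * p], (w.flatMap phi3)[i]? = (w.flatMap phi3)[s]? := by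
    have h₁ := hper 0 (by omega)
    have h₂ := hper p (by omega)
    simp only [Nat.add_zero] at h₁ h₂
    simp only [List.mem_cons, List.not_mem_nil, or_false]
    rintro i (rfl | rfl | rfl)
    · rfl
    · exact h₁.symm
    · rw [h₁, h₂, Nat.two_mul, Nat.add_assoc]
  have hresidue : ∀ r < 3, ∃ i ∈ [s, s + p, s + 2 * p], i % 3 = r := by
    intro r hr
    simp only [List.mem_cons, List.not_mem_nil, or_false, exists_eq_or_imp, exists_eq_left]
    have : p % 3 = 1 ∨ p % 3 = 2 := by omega
    omega
  obtain ⟨i₀, hi₀, h₀⟩ := hresidue 0 (by omega)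
  obtain ⟨i₂, hi₂, h₂⟩ := hresidue 2 (by omega)
  have hbound : ∀ i ∈ [s, s + p, s + 2 * p], i < (w.flatMap phi3).length := by
    simp only [List.mem_cons, List.not_mem_nil, or_false]
    rintro i (rfl | rfl | rfl) <;> omega
  have := (hletter i₀ hi₀).trans (hletter i₂ hi₂).symm
  rw [getElem?_flatMap_phi3_of_mod_three_eq_zero w (hbound i₀ hi₀) h₀,
    getElem?_flatMap_phi3_of_mod_three_eq_two w (hbound i₂ hi₂) h₂] at this
  exact Bool.false_ne_true (Option.some.inj this)

theorem phi3_eq :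
    (fun b : Bool => if b then [false, true, true] else [false, false, true]) = phi3 := by
  funext b
  cases b <;> rfl

theorem stmt8 :
    CubefreeMorphism (fun b =>
      if b then [false, true, true] else [false, false, true]) := by
  rw [phi3_eq]
  intro w hw
  rw [cubefree_iff_forall_not_hasCubeAt] at hw ⊢
  intro s p hp hcube
  by_cases h3 : 3 ∣ p
  · obtain ⟨q, rfl⟩ := h3
    exact hw _ q (by omega) hcube.of_flatMap_phi3
  · exact not_hasCubeAt_flatMap_phi3 h3 hcube
end

section
/- The 11-uniform binary morphism φ₁₁ defined by φ₁₁(0) = 00101001011 and φ₁₁(1) = 00101001101 is cubefree: φ₁₁(w) is cubefree for every cubefree binary word w. -/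
/-!
The morphism φ₁₁ is 11-uniform, and the common prefix `00101001` of φ₁₁(0) and φ₁₁(1)
occurs in an image φ₁₁(w) only at multiples of 11. A cube of period `p ≥ 10` in φ₁₁(w)
contains an occurrence of this word at a block boundary together with its translate by `p`,
so `11 ∣ p`. Since the letter at offset 9 of each block is the complement of the letter it
codes, the cube then desubstitutes to a cube of period `p / 11` in `w`. A cube of period
`< 10` lies in the image of a factor of length at most 4 of `w`, and these finitely many
cases are checked by evaluation.
-/
namespace List

variable {α β : Type*}

theorem take_drop_eq_take_drop_iff {u : List α} {a b L : ℕ} :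
    (u.drop a).take L = (u.drop b).take L ↔ ∀ k < L, u[a + k]? = u[b + k]? := by
  constructor
  · intro h k hk
    simpa [getElem?_take, hk] using congrArg (·[k]?) h
  · intro h
    ext k : 1
    simp only [getElem?_take, getElem?_drop]
    split_ifs with hk
    exacts [h k hk, rfl]

theorem forall_length_le_of_forall_ofFn {N : ℕ} {P : List α → Prop}
    (h : ∀ n ≤ N, ∀ f : Fin n → α, P (ofFn f)) (v : List α) (hv : v.length ≤ N) : P v := by
  simpa using h v.length hv (fun k => v[k])

theorem take_drop_infix (l : List α) (i n : ℕ) : (l.drop i).take n <:+: l :=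
  (take_prefix _ _).isInfix.trans (drop_suffix _ _).isInfix

section Uniform

variable {h : α → List β} {n : ℕ} (hh : ∀ a, (h a).length = n)
include hh

theorem length_flatMap_of_forall_length_eq (w : List α) :
    (w.flatMap h).length = n * w.length := by
  simp [length_flatMap, hh, mul_comm]

theorem drop_flatMap_of_forall_length_eq (w : List α) (m : ℕ) :
    (w.flatMap h).drop (n * m) = (w.drop m).flatMap h := by
  induction w generalizing m with
  | nil => simp
  | cons a w ih =>
    cases m with
    | zero => simp
    | succ m => simp [mul_add, drop_append, hh, ← ih, add_comm]

theorem take_flatMap_of_forall_length_eq (w : List α) (m : ℕ) :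
    (w.flatMap h).take (n * m) = (w.take m).flatMap h := by
  induction w generalizing m with
  | nil => simp
  | cons a w ih =>
    cases m with
    | zero => simp
    | succ m => simp [mul_add, take_append, hh, ← ih, add_comm]

theorem getElem?_flatMap_of_forall_length_eq (w : List α) (m : ℕ) {r : ℕ} (hr : r < n) :
    (w.flatMap h)[n * m + r]? = w[m]?.bind fun a => (h a)[r]? := by
  rw [← getElem?_drop, drop_flatMap_of_forall_length_eq hh,
    show w[m]? = (w.drop m)[0]? by simp]
  cases w.drop m with
  | nil => simp
  | cons a w => simp [getElem?_append_left, hh, hr]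

end Uniform

end List

section Cubes

variable {α : Type*}

def IsCubeAt (u : List α) (i p : ℕ) : Prop :=
  0 < p ∧ i + 3 * p ≤ u.length ∧ ∀ k < 2 * p, u[i + k]? = u[i + k + p]?

instance [DecidableEq α] (u : List α) (i p : ℕ) : Decidable (IsCubeAt u i p) :=
  inferInstanceAs (Decidable (_ ∧ _ ∧ _))

variable {u : List α} {i p : ℕ}

theorem IsCubeAt.take_drop_eq (hc : IsCubeAt u i p) {j L : ℕ} (hij : i ≤ j)
    (hjL : j + L ≤ i + 2 * p) : (u.drop j).take L = (u.drop (j + p)).take L :=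
  List.take_drop_eq_take_drop_iff.2 fun k hk => by
    have := hc.2.2 (j - i + k) (by omega)
    rwa [show i + (j - i + k) = j + k by omega, show j + k + p = j + p + k by omega] at this

theorem IsCubeAt.drop_take (hc : IsCubeAt u i p) {d L : ℕ} (hd : d ≤ i)
    (hL : i + 3 * p ≤ d + L) : IsCubeAt ((u.drop d).take L) (i - d) p := by
  obtain ⟨hp, hlen, hper⟩ := hc
  refine ⟨hp, by simp; omega, fun k hk => ?_⟩
  simp only [List.getElem?_take, List.getElem?_drop, if_pos (show i - d + k < L by omega),
    if_pos (show i - d + k + p < L by omega)]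
  rw [show d + (i - d + k) = i + k by omega, show d + (i - d + k + p) = i + k + p by omega]
  exact hper k hk

theorem exists_cube_infix_iff_exists_isCubeAt :
    (∃ x : List α, x ≠ [] ∧ x ++ x ++ x <:+: u) ↔ ∃ i p, IsCubeAt u i p := by
  constructor
  · rintro ⟨x, hx, s, t, rfl⟩
    refine ⟨s.length, x.length, List.length_pos_iff.2 hx, by simp; omega, fun k hk => ?_⟩
    rw [add_assoc, ← List.getElem?_drop, ← List.getElem?_drop, List.append_assoc, List.drop_left]
    have hk' : k < (x ++ x).length := by simp; omega
    calc (x ++ x ++ x ++ t)[k]? = (x ++ x ++ (x ++ t))[k]? := by simp only [List.append_assoc]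
      _ = (x ++ x ++ t)[k]? := by rw [List.getElem?_append_left hk', List.getElem?_append_left hk']
      _ = (x ++ (x ++ x ++ t))[k + x.length]? := by
        rw [List.getElem?_append_right (l₁ := x) (by omega), Nat.add_sub_cancel]
      _ = (x ++ x ++ x ++ t)[k + x.length]? := by simp only [List.append_assoc]
  · rintro ⟨i, p, hc⟩
    have ⟨hp, hlen, _⟩ := hc
    have e₁ := hc.take_drop_eq (L := p) le_rfl (by omega)
    have e₂ := hc.take_drop_eq (j := i + p) (L := p) (by omega) (by omega)
    refine ⟨(u.drop i).take p, List.ne_nil_of_length_pos (by simp; omega), ?_⟩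
    have hcube : (u.drop i).take (p + p + p) =
        (u.drop i).take p ++ (u.drop i).take p ++ (u.drop i).take p := by
      rw [List.take_add, List.take_add, List.drop_drop, List.drop_drop, ← e₁, ← add_assoc, ← e₂, e₁]
    rw [← hcube]
    exact List.take_drop_infix _ _ _

end Cubes

theorem cubefree_iff_forall_not_isCubeAt {u : List Bool} :
    Cubefree u ↔ ∀ i p, ¬ IsCubeAt u i p := by
  rw [← not_iff_not]
  unfold Cubefree
  push Not
  exact exists_cube_infix_iff_exists_isCubeAt

theorem Cubefree.of_infix {u v : List Bool} (hu : Cubefree u) (h : v <:+: u) : Cubefree v :=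
  fun x hx hxv => hu x hx (hxv.trans h)

instance : DecidablePred Cubefree := fun u =>
  decidable_of_iff (∀ i < u.length, ∀ p < u.length, ¬ IsCubeAt u i p) <| by
    rw [cubefree_iff_forall_not_isCubeAt]
    refine ⟨fun h i p hc => ?_, fun h i _ p _ => h i p⟩
    have ⟨hp, hlen, _⟩ := hc
    exact h i (by omega) p (by omega) hc

def phi11 : Bool → List Bool := fun b =>
  if b then [false, false, true, false, true, false, false, true, true, false, true]
  else [false, false, true, false, true, false, false, true, false, true, true]

def phi11Prefix : List Bool := [false, false, true, false, true, false, false, true]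

theorem length_phi11 (a : Bool) : (phi11 a).length = 11 := by cases a <;> rfl

theorem phi11Prefix_prefix_phi11 (a : Bool) : phi11Prefix <+: phi11 a := by cases a <;> decide

theorem getElem?_phi11_nine (a : Bool) : (phi11 a)[9]? = some !a := by cases a <;> rfl

theorem getElem?_flatMap_phi11_eleven_mul_add_nine (w : List Bool) (m : ℕ) :
    (w.flatMap phi11)[11 * m + 9]? = w[m]?.map (!·) := by
  rw [List.getElem?_flatMap_of_forall_length_eq length_phi11 w m (by norm_num)]
  cases w[m]? <;> simp [getElem?_phi11_nine]

theorem not_phi11Prefix_prefix_drop (v : List Bool) {r : ℕ} (hr₀ : 0 < r) (hr : r < 11) :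
    ¬ phi11Prefix <+: (v.flatMap phi11).drop r := by
  have key : ∀ n ≤ 2, ∀ f : Fin n → Bool, ∀ r < 11, 0 < r →
      ¬ phi11Prefix <+: ((List.ofFn f).flatMap phi11).drop r := by
    decide
  have hwin : ((v.flatMap phi11).drop r).take 8 = (((v.take 2).flatMap phi11).drop r).take 8 := by
    rw [List.take_drop, List.take_drop, ← List.take_flatMap_of_forall_length_eq length_phi11,
      List.take_take, min_eq_left (by omega)]
  intro h
  refine List.forall_length_le_of_forall_ofFn
    (P := fun v => ∀ r < 11, 0 < r → ¬ phi11Prefix <+: (v.flatMap phi11).drop r)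
    key (v.take 2) (by simp) r hr hr₀ ?_
  rw [List.prefix_iff_eq_take] at h ⊢
  exact h.trans hwin

theorem mod_eleven_eq_zero_of_phi11Prefix_prefix {w : List Bool} {j : ℕ}
    (h : phi11Prefix <+: (w.flatMap phi11).drop j) : j % 11 = 0 := by
  by_contra hj
  rw [← Nat.div_add_mod j 11, ← List.drop_drop,
    List.drop_flatMap_of_forall_length_eq length_phi11] at h
  exact not_phi11Prefix_prefix_drop _ (by omega) (Nat.mod_lt _ (by norm_num)) h

theorem not_isCubeAt_flatMap_phi11_of_lt_ten {w : List Bool} (hw : Cubefree w) {i p : ℕ}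
    (hp : p < 10) : ¬ IsCubeAt (w.flatMap phi11) i p := by
  have key : ∀ n ≤ 4, ∀ f : Fin n → Bool, Cubefree (List.ofFn f) →
      ∀ r < 11, ∀ p < 10, ¬ IsCubeAt ((List.ofFn f).flatMap phi11) r p := by
    decide
  intro hc
  set v := (w.drop (i / 11)).take 4
  have hv : v.flatMap phi11 = ((w.flatMap phi11).drop (11 * (i / 11))).take (11 * 4) := by
    rw [List.drop_flatMap_of_forall_length_eq length_phi11,
      List.take_flatMap_of_forall_length_eq length_phi11]
  refine List.forall_length_le_of_forall_ofFn
    (P := fun v => Cubefree v → ∀ r < 11, ∀ p < 10, ¬ IsCubeAt (v.flatMap phi11) r p)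
    key v (List.length_take_le _ _) (hw.of_infix (List.take_drop_infix _ _ _))
    (i % 11) (Nat.mod_lt _ (by norm_num)) p hp ?_
  rw [hv, show i % 11 = i - 11 * (i / 11) by omega]
  exact hc.drop_take (Nat.mul_div_le i 11) (by omega)

theorem eleven_dvd_of_isCubeAt_flatMap_phi11 {w : List Bool} {i p : ℕ}
    (hc : IsCubeAt (w.flatMap phi11) i p) (hp : 9 ≤ p) : 11 ∣ p := by
  set b := 11 * ((i + 10) / 11)
  have hlen := List.length_flatMap_of_forall_length_eq length_phi11 w
  have hb : phi11Prefix <+: (w.flatMap phi11).drop b := by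
    rw [List.drop_flatMap_of_forall_length_eq length_phi11,
      List.drop_eq_getElem_cons (by have := hc.2.1; omega), List.flatMap_cons]
    exact (phi11Prefix_prefix_phi11 _).trans (List.prefix_append _ _)
  have hbp : phi11Prefix <+: (w.flatMap phi11).drop (b + p) := by
    rw [List.prefix_iff_eq_take] at hb ⊢
    exact hb.trans (hc.take_drop_eq (L := 8) (by omega) (by omega))
  have := mod_eleven_eq_zero_of_phi11Prefix_prefix hbp
  omega

theorem isCubeAt_of_isCubeAt_flatMap_phi11 {w : List Bool} {i q : ℕ}
    (hc : IsCubeAt (w.flatMap phi11) i (11 * q)) : IsCubeAt w ((i + 1) / 11) q := by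
  obtain ⟨hq, hlen, hper⟩ := hc
  rw [List.length_flatMap_of_forall_length_eq length_phi11] at hlen
  set m := (i + 1) / 11
  refine ⟨by omega, by omega, fun k hk => ?_⟩
  have := hper (11 * (m + k) + 9 - i) (by omega)
  rw [show i + (11 * (m + k) + 9 - i) = 11 * (m + k) + 9 by omega,
    show 11 * (m + k) + 9 + 11 * q = 11 * (m + k + q) + 9 by ring,
    getElem?_flatMap_phi11_eleven_mul_add_nine, getElem?_flatMap_phi11_eleven_mul_add_nine] at this
  exact Option.map_injective Bool.not_injective this

theorem stmt11 :
    CubefreeMorphism (fun b =>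
      if b then [false, false, true, false, true, false, false, true, true, false, true]
      else [false, false, true, false, true, false, false, true, false, true, true]) := by
  change CubefreeMorphism phi11
  intro w hw
  refine cubefree_iff_forall_not_isCubeAt.2 fun i p hc => ?_
  rcases lt_or_ge p 10 with hp | hp
  · exact not_isCubeAt_flatMap_phi11_of_lt_ten hw hp hc
  · obtain ⟨q, rfl⟩ := eleven_dvd_of_isCubeAt_flatMap_phi11 hc (by omega)
    exact cubefree_iff_forall_not_isCubeAt.1 hw _ _ (isCubeAt_of_isCubeAt_flatMap_phi11 hc)
end
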